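/- For every integer k ≥ 1 there exist a rooted binary level-k phylogenetic network N on a set X of 3k+1 leaves, a binary character f on X, and phylogenetic X-trees T, T' ∈ D(N) such that PS(f,T') = PS_sw(f,N) = 1 and PS(f,T) = k+1; in particular, PS(f,T) = (k+1)·PS_sw(f,N), so the bound PS(f,T) ≤ (k+1)·PS_sw(f,N) is sharp for every k. -/
import Mathlib


noncomputable section
attribute [local instance] Classical.propDecidable

/-! ### Directed graphs -/

structure Dgraph (V : Type) where
  verts : Finset V
  edges : Finset (V × V)
  edges_sub : ∀ e ∈ edges, e.1 ∈ verts ∧ e.2 ∈ verts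

namespace Dgraph

variable {V : Type}

def edgeRel (G : Dgraph V) (u v : V) : Prop := (u, v) ∈ G.edges

def inDeg (G : Dgraph V) (v : V) : ℕ := (G.edges.filter (fun e => e.2 = v)).card

def outDeg (G : Dgraph V) (v : V) : ℕ := (G.edges.filter (fun e => e.1 = v)).card

def Reaches (G : Dgraph V) (u v : V) : Prop := Relation.ReflTransGen G.edgeRel u v

def Acyclic (G : Dgraph V) : Prop := ∀ u v, G.edgeRel u v → ¬ G.Reaches v u

def leaves (G : Dgraph V) : Finset V := G.verts.filter (fun v => G.outDeg v = 0)

def IsSubgraph (H G : Dgraph V) : Prop := H.verts ⊆ G.verts ∧ H.edges ⊆ G.edges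

def adj (G : Dgraph V) (u v : V) : Prop := (u, v) ∈ G.edges ∨ (v, u) ∈ G.edges

def Connected (G : Dgraph V) : Prop :=
  ∀ u ∈ G.verts, ∀ v ∈ G.verts, Relation.ReflTransGen G.adj u v

def deleteVert (G : Dgraph V) (x : V) : Dgraph V where
  verts := G.verts.erase x
  edges := G.edges.filter (fun e => e.1 ≠ x ∧ e.2 ≠ x)
  edges_sub := by
    intro e he
    simp only [Finset.mem_filter] at he
    obtain ⟨he1, hx1, hx2⟩ := he
    exact ⟨Finset.mem_erase.mpr ⟨hx1, (G.edges_sub e he1).1⟩,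
           Finset.mem_erase.mpr ⟨hx2, (G.edges_sub e he1).2⟩⟩

/-- A graph is biconnected if it is connected and cannot be disconnected by
deleting exactly one of its vertices. -/
def Biconnected (G : Dgraph V) : Prop :=
  G.Connected ∧ ∀ x ∈ G.verts, (G.deleteVert x).Connected

/-- A biconnected component: a maximal biconnected subgraph. -/
def IsBicomp (G H : Dgraph V) : Prop :=
  H.IsSubgraph G ∧ H.Biconnected ∧
  ∀ H' : Dgraph V, H'.IsSubgraph G → H'.Biconnected → H.IsSubgraph H' → H' = H

/-- One subdivision step: replace an edge `(u,w)` by `(u,v)`, `(v,w)` for a new vertex `v`. -/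
def SubdivStep (G G' : Dgraph V) : Prop :=
  ∃ u w v, (u, w) ∈ G.edges ∧ v ∉ G.verts ∧
    G'.verts = insert v G.verts ∧
    G'.edges = insert (u, v) (insert (v, w) (G.edges.erase (u, w)))

/-- `S.IsSubdivisionOf G` : `S` can be obtained from `G` by repeatedly subdividing edges
(`G` is a subdivision of itself). -/
def IsSubdivisionOf (S G : Dgraph V) : Prop := Relation.ReflTransGen SubdivStep G S

end Dgraph

/-! ### Rooted binary phylogenetic networks -/

structure PhyloNet (V : Type) (X : Finset V) where
  G : Dgraph V
  root : V
  root_mem : root ∈ G.verts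
  root_inDeg : G.inDeg root = 0
  root_outDeg : G.outDeg root = 1
  acyclic : G.Acyclic
  reach : ∀ v ∈ G.verts, G.Reaches root v
  degrees : ∀ v ∈ G.verts, v ≠ root →
      (G.inDeg v = 1 ∧ G.outDeg v = 2) ∨ (G.inDeg v = 2 ∧ G.outDeg v = 1) ∨
      (G.inDeg v = 1 ∧ G.outDeg v = 0)
  leaves_eq : G.leaves = X
  Xnonempty : X.Nonempty

namespace PhyloNet

variable {V : Type} {X : Finset V}

def IsRetic (N : PhyloNet V X) (v : V) : Prop := N.G.inDeg v = 2

/-- A rooted binary phylogenetic `X`-tree: a network with no reticulations. -/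
def IsTreeNet (N : PhyloNet V X) : Prop := ∀ v ∈ N.G.verts, N.G.inDeg v ≤ 1

/-- `S` is an embedding of `T` in `N`: a subgraph of `N` containing the root of `N`
that is a subdivision of `T`. -/
def IsEmbedding (N : PhyloNet V X) (T : PhyloNet V X) (S : Dgraph V) : Prop :=
  S.IsSubgraph N.G ∧ N.root ∈ S.verts ∧ S.IsSubdivisionOf T.G

/-- `T` is displayed by `N`. -/
def Displays (N T : PhyloNet V X) : Prop :=
  T.IsTreeNet ∧ ∃ S : Dgraph V, N.IsEmbedding T S

/-- A blob of `N`: a biconnected component with at least one reticulation. -/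
def IsBlob (N : PhyloNet V X) (B : Dgraph V) : Prop :=
  Dgraph.IsBicomp N.G B ∧ ∃ v ∈ B.verts, N.IsRetic v

/-- `N` is level-`k`: every biconnected component has at most `k` reticulations. -/
def IsLevel (N : PhyloNet V X) (k : ℕ) : Prop :=
  ∀ H : Dgraph V, Dgraph.IsBicomp N.G H →
    (H.verts.filter (fun v => N.IsRetic v)).card ≤ k

def numRetic (N : PhyloNet V X) : ℕ := (N.G.verts.filter (fun v => N.IsRetic v)).card

/-- Children of a blob `B`: vertices outside `B` that are children of vertices of `B`. -/
def blobChildren (N : PhyloNet V X) (B : Dgraph V) : Finset V :=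
  N.G.verts.filter (fun v => v ∉ B.verts ∧ ∃ u ∈ B.verts, (u, v) ∈ N.G.edges)

/-- Cluster of a vertex: its set of descendant leaves. -/
def cl (N : PhyloNet V X) (v : V) : Finset V := X.filter (fun x => N.G.Reaches v x)

end PhyloNet

/-- Source of a blob: its unique vertex of in-degree zero and out-degree two within the blob. -/
def IsSource {V : Type} (B : Dgraph V) (s : V) : Prop :=
  s ∈ B.verts ∧ B.inDeg s = 0 ∧ B.outDeg s = 2

/-! ### Characters and parsimony -/

/-- A character on `X`: a function that is surjective from `X` onto the set `C` of states. -/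
def IsCharacter {V C : Type} (X : Finset V) (f : V → C) : Prop :=
  ∀ c : C, ∃ x ∈ X, f x = c

/-- An extension of a character `f` (agrees with `f` on the leaves `X`). -/
def IsExtension {V C : Type} (X : Finset V) (f F : V → C) : Prop :=
  ∀ x ∈ X, F x = f x

/-- Changing number of an assignment `F` on a digraph. -/
def ch {V C : Type} (F : V → C) (G : Dgraph V) : ℕ :=
  (G.edges.filter (fun e => F e.1 ≠ F e.2)).card

/-- Parsimony score of `f` on `G` (leaves `X`). -/
def PS {V C : Type} (X : Finset V) (f : V → C) (G : Dgraph V) : ℕ :=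
  sInf {n | ∃ F : V → C, IsExtension X f F ∧ ch F G = n}

/-- Softwired parsimony score of a single character on a network. -/
def PSsw {V C : Type} {X : Finset V} (N : PhyloNet V X) (f : V → C) : ℕ :=
  sInf {n | ∃ T : PhyloNet V X, N.Displays T ∧ PS X f T.G = n}

/-! ### Switchings -/

def reticEdges {V : Type} {X : Finset V} (N : PhyloNet V X) : Finset (V × V) :=
  N.G.edges.filter (fun e => N.G.inDeg e.2 = 2)

def IsSwitching {V : Type} {X : Finset V} (N : PhyloNet V X) (R : Finset (V × V)) : Prop :=
  R ⊆ reticEdges N ∧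
  ∀ v ∈ N.G.verts, N.IsRetic v → (R.filter (fun e => e.2 = v)).card = 1

def switchGraph {V : Type} {X : Finset V} (N : PhyloNet V X) (R : Finset (V × V)) : Dgraph V where
  verts := N.G.verts
  edges := N.G.edges \ (reticEdges N \ R)
  edges_sub := by
    intro e he
    exact N.G.edges_sub e (Finset.mem_sdiff.mp he).1

/-- Suppressing a vertex of in-degree one and out-degree one. -/
def SuppressStep {V : Type} (G G' : Dgraph V) : Prop :=
  ∃ u v w, (u, v) ∈ G.edges ∧ (v, w) ∈ G.edges ∧ G.inDeg v = 1 ∧ G.outDeg v = 1 ∧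
    u ≠ v ∧ w ≠ v ∧
    G'.verts = G.verts.erase v ∧
    G'.edges = insert (u, w) ((G.edges.erase (u, v)).erase (v, w))

/-- Deleting a vertex of out-degree zero that is not a leaf in `X`. -/
def DeleteLeafStep {V : Type} (X : Finset V) (G G' : Dgraph V) : Prop :=
  ∃ v ∈ G.verts, v ∉ X ∧ G.outDeg v = 0 ∧
    G'.verts = G.verts.erase v ∧
    G'.edges = G.edges.filter (fun e => e.2 ≠ v)

def CleanupStep {V : Type} (X : Finset V) (G G' : Dgraph V) : Prop :=
  SuppressStep G G' ∨ DeleteLeafStep X G G'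

/-- The switching `R` yields the phylogenetic tree `T`. -/
def Yields {V : Type} {X : Finset V} (N : PhyloNet V X) (R : Finset (V × V))
    (T : PhyloNet V X) : Prop :=
  T.IsTreeNet ∧ Relation.ReflTransGen (CleanupStep X) (switchGraph N R) T.G

/-- Switching distance `h(N) - |R ∩ R'|`. -/
def switchDist {V : Type} {X : Finset V} (N : PhyloNet V X) (R R' : Finset (V × V)) : ℕ :=
  N.numRetic - (R ∩ R').card

/-! ### rSPR -/

def relPow {α : Type} (r : α → α → Prop) : ℕ → α → α → Prop
  | 0, a, b => a = b
  | n + 1, a, b => ∃ c, r a c ∧ relPow r n c b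

/-- A single rooted subtree prune and regraft operation. -/
def rSPRStep {V : Type} {X : Finset V} (T T' : PhyloNet V X) : Prop :=
  ∃ u v p c a b u',
    (u, v) ∈ T.G.edges ∧ u ≠ T.root ∧ v ≠ T.root ∧
    (p, u) ∈ T.G.edges ∧ (u, c) ∈ T.G.edges ∧ c ≠ v ∧
    (a, b) ∈ insert (p, c) (((T.G.edges.erase (u, v)).erase (p, u)).erase (u, c)) ∧
    ¬ T.G.Reaches v a ∧ ¬ T.G.Reaches v b ∧
    u' ∉ T.G.verts.erase u ∧
    T'.root = T.root ∧
    T'.G.verts = insert u' (T.G.verts.erase u) ∧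
    T'.G.edges = insert (a, u') (insert (u', b) (insert (u', v)
      ((insert (p, c) (((T.G.edges.erase (u, v)).erase (p, u)).erase (u, c))).erase (a, b))))

/-- rSPR distance: minimum number of rSPR operations transforming `T` into `T'`. -/
def rSPRdist {V : Type} {X : Finset V} (T T' : PhyloNet V X) : ℕ :=
  sInf {n | relPow rSPRStep n T T'}

/-! ### Root paths -/

/-- `(u,v)` is an edge of the root path of `G` (with root `r`). -/
def rootPathEdge {V : Type} (G : Dgraph V) (r u v : V) : Prop :=
  (u, v) ∈ G.edges ∧ G.outDeg u = 1 ∧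
  Relation.ReflTransGen (fun a b => (a, b) ∈ G.edges ∧ G.outDeg a = 1) r u

/-- `F` has no character-state transition on any edge of the root path. -/
def NoRootPathChange {V C : Type} (G : Dgraph V) (r : V) (F : V → C) : Prop :=
  ∀ u v, rootPathEdge G r u v → F u = F v

/-! ### Informative blobs -/

/-- `ind(F,B,S) = 0`: `F` assigns the same state to all children of the blob `B`. -/
def SameOnChildren {V C : Type} {X : Finset V} (N : PhyloNet V X) (B : Dgraph V)
    (F : V → C) : Prop :=
  ∀ a ∈ N.blobChildren B, ∀ b ∈ N.blobChildren B, F a = F b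

/-- The number of blobs `B` of `N` with `ind(F,B,S) = 1`. -/
def infBlobCount {V C : Type} {X : Finset V} (N : PhyloNet V X) (F : V → C) : ℕ :=
  Set.ncard {B : Dgraph V | N.IsBlob B ∧ ¬ SameOnChildren N B F}

/-- `b(f,N,S)`: the number of informative blobs of `N` relative to `S` and `f`. -/
def blobScore {V C : Type} {X : Finset V} (N : PhyloNet V X) (f : V → C) (S : Dgraph V) : ℕ :=
  sInf {m | ∃ F : V → C, IsExtension X f F ∧ ch F S = PS X f S ∧ infBlobCount N F = m}

/-- `F` realises `b(f,N,S)`. -/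
def Realises {V C : Type} {X : Finset V} (N : PhyloNet V X) (f : V → C) (S : Dgraph V)
    (F : V → C) : Prop :=
  IsExtension X f F ∧ ch F S = PS X f S ∧ infBlobCount N F = blobScore N f S

/-- A blob `B` is non-informative relative to `S` and `f`. -/
def NonInformative {V C : Type} {X : Finset V} (N : PhyloNet V X) (B S : Dgraph V)
    (f : V → C) : Prop :=
  ∃ F : V → C, IsExtension X f F ∧ ch F S = PS X f S ∧ SameOnChildren N B F

/-! ### Blob reduction / cluster tree pairs -/

/-- Longest-path distance from the root. -/
def distFromRoot {V : Type} {X : Finset V} (N : PhyloNet V X) (v : V) : ℕ :=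
  sSup {n | relPow N.G.edgeRel n N.root v}

/-- The subgraph of `S` rooted at `s`. -/
def subAt {V : Type} (S : Dgraph V) (s : V) : Dgraph V where
  verts := insert s (S.verts.filter (fun v => S.Reaches s v))
  edges := S.edges.filter (fun e => S.Reaches s e.1)
  edges_sub := by
    intro e he
    simp only [Finset.mem_filter] at he
    obtain ⟨he1, hr⟩ := he
    refine ⟨Finset.mem_insert.mpr (Or.inr (Finset.mem_filter.mpr ⟨(S.edges_sub e he1).1, hr⟩)),
      Finset.mem_insert.mpr (Or.inr (Finset.mem_filter.mpr ⟨(S.edges_sub e he1).2, ?_⟩))⟩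
    exact hr.tail (show S.edgeRel e.1 e.2 from he1)

/-- `S(Y)`: the subtree of `S` rooted at `s` together with a new root `ρY` and edge `(ρY, s)`. -/
def clusterY {V : Type} (S : Dgraph V) (s ρY : V) : Dgraph V where
  verts := insert ρY (subAt S s).verts
  edges := insert (ρY, s) (subAt S s).edges
  edges_sub := by
    intro e he
    rcases Finset.mem_insert.mp he with h | h
    · subst h
      exact ⟨Finset.mem_insert_self _ _,
        Finset.mem_insert.mpr (Or.inr (Finset.mem_insert_self _ _))⟩
    · have h2 := (subAt S s).edges_sub e h
      exact ⟨Finset.mem_insert.mpr (Or.inr h2.1), Finset.mem_insert.mpr (Or.inr h2.2)⟩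

/-- `S(Ȳ)`: `S` with the subtree rooted at `s` replaced by a single new leaf `y`. -/
def clusterYbar {V : Type} (S : Dgraph V) (s y : V) : Dgraph V where
  verts := insert y (S.verts.filter (fun v => ¬ S.Reaches s v))
  edges := (S.edges.filter (fun e => ¬ S.Reaches s e.1 ∧ ¬ S.Reaches s e.2)) ∪
           ((S.edges.filter (fun e => e.2 = s ∧ ¬ S.Reaches s e.1)).image (fun e => (e.1, y)))
  edges_sub := by
    intro e he
    rcases Finset.mem_union.mp he with h | h
    · simp only [Finset.mem_filter] at h
      exact ⟨Finset.mem_insert.mpr (Or.inr (Finset.mem_filter.mpr ⟨(S.edges_sub _ h.1).1, h.2.1⟩)),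
        Finset.mem_insert.mpr (Or.inr (Finset.mem_filter.mpr ⟨(S.edges_sub _ h.1).2, h.2.2⟩))⟩
    · simp only [Finset.mem_image, Finset.mem_filter] at h
      obtain ⟨a, ⟨ha, _, hnr⟩, hae⟩ := h
      constructor
      · rw [← hae]
        exact Finset.mem_insert.mpr (Or.inr (Finset.mem_filter.mpr ⟨(S.edges_sub _ ha).1, hnr⟩))
      · rw [← hae]
        exact Finset.mem_insert_self _ _

/-- A pair of cluster extensions with respect to `f`. -/
def ClusterExtPair {V C : Type} (X Y : Finset V) (y ρY : V) (f FY FYb : V → C) : Prop :=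
  (∀ x ∈ Y, FY x = f x) ∧ (∀ x ∈ X \ Y, FYb x = f x) ∧ FYb y = FY ρY

/-! ### Parental trees -/

/-- A vertex of `U*(N)`: a directed path in `N` starting at the root. -/
def UstarVert {V : Type} {X : Finset V} (N : PhyloNet V X) (p : List V) : Prop :=
  p ≠ [] ∧ p.head? = some N.root ∧ p.Chain' (fun a b => (a, b) ∈ N.G.edges)

/-- An edge of `U*(N)`: `q` extends `p` by one additional edge of `N`. -/
def UstarEdge {V : Type} {X : Finset V} (N : PhyloNet V X) (p q : List V) : Prop :=
  UstarVert N p ∧ UstarVert N q ∧ ∃ w, q = p ++ [w]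

/-- `T` is a parental tree of `N`: obtained from a subgraph of `U*(N)` by suppressing
in-degree-one out-degree-one vertices; its leaves are labelled bijectively by `X`
via the endpoint of the corresponding path. -/
def IsParentalTree {V : Type} {X : Finset V} (N : PhyloNet V X) {L : Finset (List V)}
    (T : PhyloNet (List V) L) : Prop :=
  T.IsTreeNet ∧
  (∀ x ∈ X, ∃! p, p ∈ L ∧ p.getLast? = some x) ∧
  (∀ p ∈ L, ∃ x ∈ X, p.getLast? = some x) ∧
  ∃ H : Dgraph (List V),
    (∀ p ∈ H.verts, UstarVert N p) ∧
    (∀ e ∈ H.edges, UstarEdge N e.1 e.2) ∧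
    Relation.ReflTransGen SuppressStep H T.G

/-- Parsimony score of a character `f` on a tree whose leaves are labelled by
elements of `X` via the last vertex of the corresponding path. -/
def PSlab {V C : Type} (L : Finset (List V)) (f : V → C) (G : Dgraph (List V)) : ℕ :=
  sInf {n | ∃ F : List V → C,
    (∀ p ∈ L, ∀ x, p.getLast? = some x → F p = f x) ∧ ch F G = n}

/-- Parental parsimony score. -/
def PSpa {V C : Type} {X : Finset V} (N : PhyloNet V X) (f : V → C) : ℕ :=
  sInf {n | ∃ (L : Finset (List V)) (T : PhyloNet (List V) L),
    IsParentalTree N T ∧ PSlab L f T.G = n}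

/-! ### Undirected graphs, semi-directed networks -/

structure UGraph (V : Type) where
  verts : Finset V
  edges : Finset (Sym2 V)
  edges_sub : ∀ e ∈ edges, ∀ v ∈ e, v ∈ verts
  no_loops : ∀ e ∈ edges, ¬ e.IsDiag

namespace UGraph

variable {V : Type}

def adj (G : UGraph V) (u v : V) : Prop := s(u, v) ∈ G.edges

def degree (G : UGraph V) (v : V) : ℕ := (G.edges.filter (fun e => v ∈ e)).card

def Connected (G : UGraph V) : Prop :=
  ∀ u ∈ G.verts, ∀ v ∈ G.verts, Relation.ReflTransGen G.adj u v

end UGraph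

/-- An unrooted binary phylogenetic `X`-tree: a connected undirected acyclic graph with
leaf set `X` whose inner vertices all have degree three. -/
structure UTree (V : Type) (X : Finset V) where
  g : UGraph V
  connected : g.Connected
  card_eq : g.verts.card = g.edges.card + 1
  leaves_eq : g.verts.filter (fun v => g.degree v = 1) = X
  degree_cases : ∀ v ∈ g.verts, g.degree v = 1 ∨ g.degree v = 3

def USubdivStep {V : Type} (G G' : UGraph V) : Prop :=
  ∃ u w v, s(u, w) ∈ G.edges ∧ v ∉ G.verts ∧
    G'.verts = insert v G.verts ∧
    G'.edges = insert s(u, v) (insert s(v, w) (G.edges.erase s(u, w)))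

def IsUSubdivisionOf {V : Type} (S G : UGraph V) : Prop :=
  Relation.ReflTransGen USubdivStep G S

/-- A binary semi-directed network: directed (reticulation) edges and undirected edges. -/
structure SemiDir (V : Type) where
  verts : Finset V
  dirE : Finset (V × V)
  undirE : Finset (Sym2 V)
  dir_sub : ∀ e ∈ dirE, e.1 ∈ verts ∧ e.2 ∈ verts
  undir_sub : ∀ e ∈ undirE, ∀ v ∈ e, v ∈ verts
  dir_noloop : ∀ e ∈ dirE, e.1 ≠ e.2
  undir_noloop : ∀ e ∈ undirE, ¬ e.IsDiag

namespace SemiDir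

variable {V : Type}

/-- The underlying undirected graph. -/
def und (Ns : SemiDir V) : UGraph V where
  verts := Ns.verts
  edges := Ns.undirE ∪ Ns.dirE.image (fun e => s(e.1, e.2))
  edges_sub := by
    intro e he v hv
    rcases Finset.mem_union.mp he with h | h
    · exact Ns.undir_sub e h v hv
    · obtain ⟨a, ha, hae⟩ := Finset.mem_image.mp h
      rw [← hae] at hv
      rcases Sym2.mem_iff.mp hv with h1 | h1
      · rw [h1]; exact (Ns.dir_sub a ha).1
      · rw [h1]; exact (Ns.dir_sub a ha).2
  no_loops := by
    intro e he
    rcases Finset.mem_union.mp he with h | h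
    · exact Ns.undir_noloop e h
    · obtain ⟨a, ha, hae⟩ := Finset.mem_image.mp h
      rw [← hae]
      simp only [Sym2.isDiag_iff_proj_eq]
      exact Ns.dir_noloop a ha

def isRetic (Ns : SemiDir V) (v : V) : Prop :=
  (Ns.dirE.filter (fun e => e.2 = v)).card = 2

/-- An unrooted phylogenetic `X`-tree is displayed by a semi-directed network. -/
def Displays {X : Finset V} (Ns : SemiDir V) (Tu : UTree V X) : Prop :=
  ∃ S : SemiDir V, S.verts ⊆ Ns.verts ∧ S.dirE ⊆ Ns.dirE ∧ S.undirE ⊆ Ns.undirE ∧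
    (∀ v : V, Ns.isRetic v → (S.dirE.filter (fun e => e.2 = v)).card ≤ 1) ∧
    IsUSubdivisionOf S.und Tu.g

end SemiDir

/-- `Nr` is a rooted partner of `Ns`: `Ns` is obtained from `Nr` by deleting the root,
suppressing the child of the root, and omitting the direction of every
non-reticulation edge. -/
def RootedPartner {V : Type} {X : Finset V} (Nr : PhyloNet V X) (Ns : SemiDir V) : Prop :=
  ∃ v w w', (Nr.root, v) ∈ Nr.G.edges ∧ (v, w) ∈ Nr.G.edges ∧ (v, w') ∈ Nr.G.edges ∧ w ≠ w' ∧
    Ns.verts = (Nr.G.verts.erase Nr.root).erase v ∧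
    Ns.dirE = Nr.G.edges.filter (fun e => Nr.G.inDeg e.2 = 2 ∧ e.1 ≠ v) ∧
    Ns.undirE = insert s(w, w')
      ((Nr.G.edges.filter (fun e => Nr.G.inDeg e.2 ≠ 2 ∧ e.1 ≠ Nr.root ∧ e.1 ≠ v)).image
        (fun e => s(e.1, e.2)))

/-- `Tu` is obtained from the rooted tree `T` by deleting the root and suppressing
its child. -/
def UnrootOf {V : Type} {X : Finset V} (T : PhyloNet V X) (Tu : UTree V X) : Prop :=
  ∃ v w w', (T.root, v) ∈ T.G.edges ∧ (v, w) ∈ T.G.edges ∧ (v, w') ∈ T.G.edges ∧ w ≠ w' ∧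
    Tu.g.verts = (T.G.verts.erase T.root).erase v ∧
    Tu.g.edges = insert s(w, w')
      ((T.G.edges.filter (fun e => e.1 ≠ T.root ∧ e.1 ≠ v)).image (fun e => s(e.1, e.2)))

/-- Changing number on an undirected graph. -/
def chU {V C : Type} (F : V → C) (G : UGraph V) : ℕ :=
  (G.edges.filter (fun e => Sym2.lift ⟨fun a b => F a ≠ F b, fun a b => propext ne_comm⟩ e)).card

/-- Parsimony score on an undirected graph with leaf set `X`. -/
def PSU {V C : Type} (X : Finset V) (f : V → C) (G : UGraph V) : ℕ :=
  sInf {n | ∃ F : V → C, IsExtension X f F ∧ chU F G = n}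

/-- Softwired parsimony score of a character on a semi-directed network. -/
def PSswU {V C : Type} (X : Finset V) (Ns : SemiDir V) (f : V → C) : ℕ :=
  sInf {n | ∃ Tu : UTree V X, Ns.Displays Tu ∧ PSU X f Tu.g = n}


/-! ### Auxiliary development for `bound_is_sharp` -/

section Sharp

open Finset

/-- Reachability in a numerically monotone digraph is monotone. -/
lemma reaches_mono {G : Dgraph ℕ} (h : ∀ e ∈ G.edges, e.1 < e.2) {u v : ℕ}
    (hr : G.Reaches u v) : u ≤ v := by
  induction hr with
  | refl => exact le_refl u
  | tail hab hbc ih => exact le_trans ih (le_of_lt (h _ hbc))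

lemma acyclic_of_mono {G : Dgraph ℕ} (h : ∀ e ∈ G.edges, e.1 < e.2) : G.Acyclic := by
  intro u v huv hr
  have h1 := reaches_mono h hr
  have h2 := h _ huv
  omega

lemma PS_le {V C : Type} {X : Finset V} {f : V → C} {G : Dgraph V} {F : V → C} {n : ℕ}
    (h1 : IsExtension X f F) (h2 : ch F G = n) : PS X f G ≤ n :=
  Nat.sInf_le ⟨F, h1, h2⟩

lemma le_PS {V C : Type} {X : Finset V} {f : V → C} {G : Dgraph V} {n : ℕ}
    (h : ∀ F : V → C, IsExtension X f F → n ≤ ch F G) : n ≤ PS X f G := by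
  refine le_csInf ⟨ch f G, f, fun x _ => rfl, rfl⟩ ?_
  rintro m ⟨F, hF, rfl⟩
  exact h F hF

lemma eq_on_reaches {V C : Type} {F : V → C} {G : Dgraph V} (h : ch F G = 0)
    {u v : V} (hr : G.Reaches u v) : F u = F v := by
  have hz : ∀ e ∈ G.edges, F e.1 = F e.2 := by
    intro e he
    by_contra hne
    have hmem : e ∈ G.edges.filter (fun e => F e.1 ≠ F e.2) := Finset.mem_filter.mpr ⟨he, hne⟩
    have hemp : G.edges.filter (fun e => F e.1 ≠ F e.2) = ∅ := Finset.card_eq_zero.mp h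
    rw [hemp] at hmem
    simp at hmem
  induction hr with
  | refl => rfl
  | tail hab hbc ih => exact ih.trans (hz _ hbc)

lemma one_le_PS {V : Type} {X : Finset V} (T : PhyloNet V X) (f : V → Bool)
    (hc : IsCharacter X f) : 1 ≤ PS X f T.G := by
  apply le_PS
  intro F hF
  by_contra hlt
  have h0 : ch F T.G = 0 := by omega
  obtain ⟨x, hx, hfx⟩ := hc true
  obtain ⟨y, hy, hfy⟩ := hc false
  have hxv : x ∈ T.G.verts := by
    have : x ∈ T.G.leaves := by rw [T.leaves_eq]; exact hx
    exact Finset.mem_of_mem_filter _ this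
  have hyv : y ∈ T.G.verts := by
    have : y ∈ T.G.leaves := by rw [T.leaves_eq]; exact hy
    exact Finset.mem_of_mem_filter _ this
  have e1 := eq_on_reaches h0 (T.reach x hxv)
  have e2 := eq_on_reaches h0 (T.reach y hyv)
  have : f x = f y := by rw [← hF x hx, ← hF y hy, ← e1, ← e2]
  rw [hfx, hfy] at this
  exact Bool.true_eq_false.mp this

lemma card_lower {s : Finset (ℕ × ℕ)} {P : ℕ → Finset (ℕ × ℕ)} {m : ℕ}
    (hdisj : ∀ i < m, ∀ j < m, i ≠ j → Disjoint (P i) (P j))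
    (hne : ∀ i < m, ((P i) ∩ s).Nonempty) : m ≤ s.card := by
  have hsub : (Finset.range m).biUnion (fun i => P i ∩ s) ⊆ s := by
    intro e he
    obtain ⟨i, _, hi⟩ := Finset.mem_biUnion.mp he
    exact (Finset.mem_inter.mp hi).2
  have hcard := Finset.card_le_card hsub
  rw [Finset.card_biUnion] at hcard
  · refine le_trans ?_ hcard
    calc m = ∑ _i ∈ Finset.range m, 1 := by simp
    _ ≤ ∑ i ∈ Finset.range m, (P i ∩ s).card := by
        apply Finset.sum_le_sum
        intro i hi
        exact Finset.card_pos.mpr (hne i (Finset.mem_range.mp hi))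
  · intro i hi j hj hij
    exact Finset.disjoint_of_subset_left Finset.inter_subset_left
      (Finset.disjoint_of_subset_right Finset.inter_subset_left
        (hdisj i (Finset.mem_range.mp hi) j (Finset.mem_range.mp hj) hij))


/-! ### The explicit construction -/

/-- Edges of the network `N_k`.  Vertices: root `0`; spine `10*j` for `j ∈ [1, 3k+1]`
(`s_i = 10(2i-1)`, `u_i = 10(2i)`, `q_i = 10(2k+i)`, `w = 10(3k+1)`); off-spine
`10*j+1` (`x_i = 20i-9` leaf, `A_i = 20i+1`, `r_i = 20k+10i+1` reticulation);
leaves `y_i = 20i+2`, `z_i = 20k+10i+2`. -/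
def EN (k : ℕ) : Finset (ℕ × ℕ) :=
  insert (0, 10)
    (((Finset.Icc 1 (3*k)).biUnion fun j => {(10*j, 10*j+10), (10*j, 10*j+1)}) ∪
     ((Finset.Icc 1 k).biUnion fun i =>
       {(20*i+1, 20*i+2), (20*i+1, 20*k+10*i+1), (20*k+10*i+1, 20*k+10*i+2)}))

def VN (k : ℕ) : Finset ℕ :=
  insert 0 ((((Finset.Icc 1 (3*k+1)).image fun j => 10*j) ∪
             ((Finset.Icc 1 (3*k)).image fun j => 10*j+1)) ∪
            (((Finset.Icc 1 k).image fun i => 20*i+2) ∪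
             ((Finset.Icc 1 k).image fun i => 20*k+10*i+2)))

def XS (k : ℕ) : Finset ℕ :=
  insert (30*k+10)
    ((((Finset.Icc 1 k).image fun i => 20*i-9) ∪ ((Finset.Icc 1 k).image fun i => 20*i+2)) ∪
     ((Finset.Icc 1 k).image fun i => 20*k+10*i+2))

lemma mem_EN {k a b : ℕ} : (a, b) ∈ EN k ↔
    (a = 0 ∧ b = 10) ∨
    (∃ j, 1 ≤ j ∧ j ≤ 3*k ∧ a = 10*j ∧ (b = 10*j+10 ∨ b = 10*j+1)) ∨
    (∃ i, 1 ≤ i ∧ i ≤ k ∧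
      ((a = 20*i+1 ∧ (b = 20*i+2 ∨ b = 20*k+10*i+1)) ∨
       (a = 20*k+10*i+1 ∧ b = 20*k+10*i+2))) := by
  simp only [EN, Finset.mem_insert, Finset.mem_union, Finset.mem_biUnion, Finset.mem_Icc,
    Finset.mem_singleton, Prod.mk.injEq]
  constructor
  · rintro (⟨rfl, rfl⟩ | ⟨j, ⟨h1, h2⟩, (⟨rfl, rfl⟩ | ⟨rfl, rfl⟩)⟩ |
      ⟨i, ⟨h1, h2⟩, (⟨rfl, rfl⟩ | ⟨rfl, rfl⟩ | ⟨rfl, rfl⟩)⟩)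
    · exact Or.inl ⟨rfl, rfl⟩
    · exact Or.inr (Or.inl ⟨j, h1, h2, rfl, Or.inl rfl⟩)
    · exact Or.inr (Or.inl ⟨j, h1, h2, rfl, Or.inr rfl⟩)
    · exact Or.inr (Or.inr ⟨i, h1, h2, Or.inl ⟨rfl, Or.inl rfl⟩⟩)
    · exact Or.inr (Or.inr ⟨i, h1, h2, Or.inl ⟨rfl, Or.inr rfl⟩⟩)
    · exact Or.inr (Or.inr ⟨i, h1, h2, Or.inr ⟨rfl, rfl⟩⟩)
  · rintro (⟨rfl, rfl⟩ | ⟨j, h1, h2, rfl, (rfl | rfl)⟩ |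
      ⟨i, h1, h2, (⟨rfl, (rfl | rfl)⟩ | ⟨rfl, rfl⟩)⟩)
    · exact Or.inl ⟨rfl, rfl⟩
    · exact Or.inr (Or.inl ⟨j, ⟨h1, h2⟩, Or.inl ⟨rfl, rfl⟩⟩)
    · exact Or.inr (Or.inl ⟨j, ⟨h1, h2⟩, Or.inr ⟨rfl, rfl⟩⟩)
    · exact Or.inr (Or.inr ⟨i, ⟨h1, h2⟩, Or.inl ⟨rfl, rfl⟩⟩)
    · exact Or.inr (Or.inr ⟨i, ⟨h1, h2⟩, Or.inr (Or.inl ⟨rfl, rfl⟩)⟩)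
    · exact Or.inr (Or.inr ⟨i, ⟨h1, h2⟩, Or.inr (Or.inr ⟨rfl, rfl⟩)⟩)

lemma mem_VN {k v : ℕ} : v ∈ VN k ↔
    v = 0 ∨ (∃ j, 1 ≤ j ∧ j ≤ 3*k+1 ∧ v = 10*j) ∨ (∃ j, 1 ≤ j ∧ j ≤ 3*k ∧ v = 10*j+1) ∨
    (∃ i, 1 ≤ i ∧ i ≤ k ∧ v = 20*i+2) ∨ (∃ i, 1 ≤ i ∧ i ≤ k ∧ v = 20*k+10*i+2) := by
  simp only [VN, Finset.mem_insert, Finset.mem_union, Finset.mem_image, Finset.mem_Icc]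
  constructor
  · rintro (rfl | ((⟨j, ⟨h1, h2⟩, rfl⟩ | ⟨j, ⟨h1, h2⟩, rfl⟩) |
      (⟨i, ⟨h1, h2⟩, rfl⟩ | ⟨i, ⟨h1, h2⟩, rfl⟩)))
    · exact Or.inl rfl
    · exact Or.inr (Or.inl ⟨j, h1, h2, rfl⟩)
    · exact Or.inr (Or.inr (Or.inl ⟨j, h1, h2, rfl⟩))
    · exact Or.inr (Or.inr (Or.inr (Or.inl ⟨i, h1, h2, rfl⟩)))
    · exact Or.inr (Or.inr (Or.inr (Or.inr ⟨i, h1, h2, rfl⟩)))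
  · rintro (rfl | ⟨j, h1, h2, rfl⟩ | ⟨j, h1, h2, rfl⟩ | ⟨i, h1, h2, rfl⟩ | ⟨i, h1, h2, rfl⟩)
    · exact Or.inl rfl
    · exact Or.inr (Or.inl (Or.inl ⟨j, ⟨h1, h2⟩, rfl⟩))
    · exact Or.inr (Or.inl (Or.inr ⟨j, ⟨h1, h2⟩, rfl⟩))
    · exact Or.inr (Or.inr (Or.inl ⟨i, ⟨h1, h2⟩, rfl⟩))
    · exact Or.inr (Or.inr (Or.inr ⟨i, ⟨h1, h2⟩, rfl⟩))

lemma mem_XS {k v : ℕ} : v ∈ XS k ↔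
    v = 30*k+10 ∨ (∃ i, 1 ≤ i ∧ i ≤ k ∧ v = 20*i-9) ∨
    (∃ i, 1 ≤ i ∧ i ≤ k ∧ v = 20*i+2) ∨ (∃ i, 1 ≤ i ∧ i ≤ k ∧ v = 20*k+10*i+2) := by
  simp only [XS, Finset.mem_insert, Finset.mem_union, Finset.mem_image, Finset.mem_Icc]
  constructor
  · rintro (rfl | ((⟨i, ⟨h1, h2⟩, rfl⟩ | ⟨i, ⟨h1, h2⟩, rfl⟩) | ⟨i, ⟨h1, h2⟩, rfl⟩))
    · exact Or.inl rfl
    · exact Or.inr (Or.inl ⟨i, h1, h2, rfl⟩)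
    · exact Or.inr (Or.inr (Or.inl ⟨i, h1, h2, rfl⟩))
    · exact Or.inr (Or.inr (Or.inr ⟨i, h1, h2, rfl⟩))
  · rintro (rfl | ⟨i, h1, h2, rfl⟩ | ⟨i, h1, h2, rfl⟩ | ⟨i, h1, h2, rfl⟩)
    · exact Or.inl rfl
    · exact Or.inr (Or.inl (Or.inl ⟨i, ⟨h1, h2⟩, rfl⟩))
    · exact Or.inr (Or.inl (Or.inr ⟨i, ⟨h1, h2⟩, rfl⟩))
    · exact Or.inr (Or.inr ⟨i, ⟨h1, h2⟩, rfl⟩)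


def NG (k : ℕ) : Dgraph ℕ where
  verts := VN k
  edges := EN k
  edges_sub := by
    rintro ⟨a, b⟩ he
    rw [mem_EN] at he
    constructor <;> rw [mem_VN]
    · rcases he with ⟨rfl, rfl⟩ | ⟨j, h1, h2, rfl, _⟩ |
        ⟨i, h1, h2, (⟨rfl, _⟩ | ⟨rfl, rfl⟩)⟩
      · exact Or.inl rfl
      · exact Or.inr (Or.inl ⟨j, h1, by omega, rfl⟩)
      · exact Or.inr (Or.inr (Or.inl ⟨2*i, by omega, by omega, by omega⟩))
      · exact Or.inr (Or.inr (Or.inl ⟨2*k+i, by omega, by omega, by omega⟩))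
    · rcases he with ⟨rfl, rfl⟩ | ⟨j, h1, h2, rfl, (rfl | rfl)⟩ |
        ⟨i, h1, h2, (⟨rfl, (rfl | rfl)⟩ | ⟨rfl, rfl⟩)⟩
      · exact Or.inr (Or.inl ⟨1, by omega, by omega, by omega⟩)
      · exact Or.inr (Or.inl ⟨j+1, by omega, by omega, by omega⟩)
      · exact Or.inr (Or.inr (Or.inl ⟨j, h1, by omega, rfl⟩))
      · exact Or.inr (Or.inr (Or.inr (Or.inl ⟨i, h1, h2, rfl⟩)))
      · exact Or.inr (Or.inr (Or.inl ⟨2*k+i, by omega, by omega, by omega⟩))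
      · exact Or.inr (Or.inr (Or.inr (Or.inr ⟨i, h1, h2, rfl⟩)))

lemma NG_of_root {k : ℕ} : (EN k).filter (fun e => e.1 = 0) = {(0, 10)} := by
  ext ⟨a, b⟩
  simp only [Finset.mem_filter, mem_EN, Finset.mem_singleton, Prod.mk.injEq]
  constructor
  · rintro ⟨(⟨rfl, rfl⟩ | ⟨j, h1, h2, rfl, (rfl | rfl)⟩ |
      ⟨i, h1, h2, (⟨rfl, (rfl | rfl)⟩ | ⟨rfl, rfl⟩)⟩), h⟩ <;> omega
  · rintro ⟨rfl, rfl⟩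
    exact ⟨Or.inl ⟨rfl, rfl⟩, rfl⟩

lemma NG_if_root {k : ℕ} : (EN k).filter (fun e => e.2 = 0) = ∅ := by
  rw [Finset.filter_eq_empty_iff]
  rintro ⟨a, b⟩ he
  rw [mem_EN] at he
  rcases he with ⟨rfl, rfl⟩ | ⟨j, h1, h2, rfl, (rfl | rfl)⟩ |
    ⟨i, h1, h2, (⟨rfl, (rfl | rfl)⟩ | ⟨rfl, rfl⟩)⟩ <;> simp <;> omega

lemma NG_of_spine {k j : ℕ} (h1 : 1 ≤ j) (h2 : j ≤ 3*k) :
    (EN k).filter (fun e => e.1 = 10*j) = {(10*j, 10*j+10), (10*j, 10*j+1)} := by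
  ext ⟨a, b⟩
  simp only [Finset.mem_filter, mem_EN, Finset.mem_insert, Finset.mem_singleton, Prod.mk.injEq]
  constructor
  · rintro ⟨(⟨rfl, rfl⟩ | ⟨j', hj1, hj2, rfl, (rfl | rfl)⟩ |
      ⟨i, hi1, hi2, (⟨rfl, (rfl | rfl)⟩ | ⟨rfl, rfl⟩)⟩), h⟩ <;> omega
  · rintro (⟨rfl, rfl⟩ | ⟨rfl, rfl⟩)
    · exact ⟨Or.inr (Or.inl ⟨j, h1, h2, rfl, Or.inl rfl⟩), rfl⟩
    · exact ⟨Or.inr (Or.inl ⟨j, h1, h2, rfl, Or.inr rfl⟩), rfl⟩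

lemma NG_if_spine {k j : ℕ} (h1 : 1 ≤ j) (h2 : j ≤ 3*k+1) :
    (EN k).filter (fun e => e.2 = 10*j) = {(10*j-10, 10*j)} := by
  ext ⟨a, b⟩
  simp only [Finset.mem_filter, mem_EN, Finset.mem_singleton, Prod.mk.injEq]
  constructor
  · rintro ⟨(⟨rfl, rfl⟩ | ⟨j', hj1, hj2, rfl, (rfl | rfl)⟩ |
      ⟨i, hi1, hi2, (⟨rfl, (rfl | rfl)⟩ | ⟨rfl, rfl⟩)⟩), h⟩ <;> omega
  · rintro ⟨rfl, rfl⟩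
    rcases Nat.eq_or_lt_of_le h1 with h | h
    · exact ⟨Or.inl ⟨by omega, by omega⟩, rfl⟩
    · exact ⟨Or.inr (Or.inl ⟨j-1, by omega, by omega, by omega, Or.inl (by omega)⟩), rfl⟩

lemma NG_of_leaf {k v : ℕ} (hv : v ∈ XS k) :
    (EN k).filter (fun e => e.1 = v) = ∅ := by
  rw [Finset.filter_eq_empty_iff]
  rw [mem_XS] at hv
  rintro ⟨a, b⟩ he
  rw [mem_EN] at he
  rcases hv with rfl | ⟨i', hi1', hi2', rfl⟩ | ⟨i', hi1', hi2', rfl⟩ | ⟨i', hi1', hi2', rfl⟩ <;>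
  rcases he with ⟨rfl, rfl⟩ | ⟨j, h1, h2, rfl, (rfl | rfl)⟩ |
    ⟨i, h1, h2, (⟨rfl, (rfl | rfl)⟩ | ⟨rfl, rfl⟩)⟩ <;> simp <;> omega

lemma NG_of_A {k i : ℕ} (h1 : 1 ≤ i) (h2 : i ≤ k) :
    (EN k).filter (fun e => e.1 = 20*i+1) = {(20*i+1, 20*i+2), (20*i+1, 20*k+10*i+1)} := by
  ext ⟨a, b⟩
  simp only [Finset.mem_filter, mem_EN, Finset.mem_insert, Finset.mem_singleton, Prod.mk.injEq]
  constructor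
  · rintro ⟨(⟨rfl, rfl⟩ | ⟨j, hj1, hj2, rfl, (rfl | rfl)⟩ |
      ⟨i', hi1, hi2, (⟨rfl, (rfl | rfl)⟩ | ⟨rfl, rfl⟩)⟩), h⟩ <;> omega
  · rintro (⟨rfl, rfl⟩ | ⟨rfl, rfl⟩)
    · exact ⟨Or.inr (Or.inr ⟨i, h1, h2, Or.inl ⟨rfl, Or.inl rfl⟩⟩), rfl⟩
    · exact ⟨Or.inr (Or.inr ⟨i, h1, h2, Or.inl ⟨rfl, Or.inr rfl⟩⟩), rfl⟩

lemma NG_if_A {k i : ℕ} (h1 : 1 ≤ i) (h2 : i ≤ k) :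
    (EN k).filter (fun e => e.2 = 20*i+1) = {(20*i, 20*i+1)} := by
  ext ⟨a, b⟩
  simp only [Finset.mem_filter, mem_EN, Finset.mem_singleton, Prod.mk.injEq]
  constructor
  · rintro ⟨(⟨rfl, rfl⟩ | ⟨j, hj1, hj2, rfl, (rfl | rfl)⟩ |
      ⟨i', hi1, hi2, (⟨rfl, (rfl | rfl)⟩ | ⟨rfl, rfl⟩)⟩), h⟩ <;> omega
  · rintro ⟨rfl, rfl⟩
    exact ⟨Or.inr (Or.inl ⟨2*i, by omega, by omega, by omega, Or.inr (by omega)⟩), rfl⟩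

lemma NG_of_r {k i : ℕ} (h1 : 1 ≤ i) (h2 : i ≤ k) :
    (EN k).filter (fun e => e.1 = 20*k+10*i+1) = {(20*k+10*i+1, 20*k+10*i+2)} := by
  ext ⟨a, b⟩
  simp only [Finset.mem_filter, mem_EN, Finset.mem_singleton, Prod.mk.injEq]
  constructor
  · rintro ⟨(⟨rfl, rfl⟩ | ⟨j, hj1, hj2, rfl, (rfl | rfl)⟩ |
      ⟨i', hi1, hi2, (⟨rfl, (rfl | rfl)⟩ | ⟨rfl, rfl⟩)⟩), h⟩ <;> omega
  · rintro ⟨rfl, rfl⟩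
    exact ⟨Or.inr (Or.inr ⟨i, h1, h2, Or.inr ⟨rfl, rfl⟩⟩), rfl⟩

lemma NG_if_r {k i : ℕ} (h1 : 1 ≤ i) (h2 : i ≤ k) :
    (EN k).filter (fun e => e.2 = 20*k+10*i+1) =
      {(20*k+10*i, 20*k+10*i+1), (20*i+1, 20*k+10*i+1)} := by
  ext ⟨a, b⟩
  simp only [Finset.mem_filter, mem_EN, Finset.mem_insert, Finset.mem_singleton, Prod.mk.injEq]
  constructor
  · rintro ⟨(⟨rfl, rfl⟩ | ⟨j, hj1, hj2, rfl, (rfl | rfl)⟩ |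
      ⟨i', hi1, hi2, (⟨rfl, (rfl | rfl)⟩ | ⟨rfl, rfl⟩)⟩), h⟩ <;> omega
  · rintro (⟨rfl, rfl⟩ | ⟨rfl, rfl⟩)
    · exact ⟨Or.inr (Or.inl ⟨2*k+i, by omega, by omega, by omega, Or.inr (by omega)⟩), rfl⟩
    · exact ⟨Or.inr (Or.inr ⟨i, h1, h2, Or.inl ⟨rfl, Or.inr rfl⟩⟩), rfl⟩

lemma NG_if_x {k i : ℕ} (h1 : 1 ≤ i) (h2 : i ≤ k) :
    (EN k).filter (fun e => e.2 = 20*i-9) = {(20*i-10, 20*i-9)} := by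
  ext ⟨a, b⟩
  simp only [Finset.mem_filter, mem_EN, Finset.mem_singleton, Prod.mk.injEq]
  constructor
  · rintro ⟨(⟨rfl, rfl⟩ | ⟨j, hj1, hj2, rfl, (rfl | rfl)⟩ |
      ⟨i', hi1, hi2, (⟨rfl, (rfl | rfl)⟩ | ⟨rfl, rfl⟩)⟩), h⟩ <;> omega
  · rintro ⟨rfl, rfl⟩
    exact ⟨Or.inr (Or.inl ⟨2*i-1, by omega, by omega, by omega, Or.inr (by omega)⟩), rfl⟩

lemma NG_if_y {k i : ℕ} (h1 : 1 ≤ i) (h2 : i ≤ k) :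
    (EN k).filter (fun e => e.2 = 20*i+2) = {(20*i+1, 20*i+2)} := by
  ext ⟨a, b⟩
  simp only [Finset.mem_filter, mem_EN, Finset.mem_singleton, Prod.mk.injEq]
  constructor
  · rintro ⟨(⟨rfl, rfl⟩ | ⟨j, hj1, hj2, rfl, (rfl | rfl)⟩ |
      ⟨i', hi1, hi2, (⟨rfl, (rfl | rfl)⟩ | ⟨rfl, rfl⟩)⟩), h⟩ <;> omega
  · rintro ⟨rfl, rfl⟩
    exact ⟨Or.inr (Or.inr ⟨i, h1, h2, Or.inl ⟨rfl, Or.inl rfl⟩⟩), rfl⟩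

lemma NG_if_z {k i : ℕ} (h1 : 1 ≤ i) (h2 : i ≤ k) :
    (EN k).filter (fun e => e.2 = 20*k+10*i+2) = {(20*k+10*i+1, 20*k+10*i+2)} := by
  ext ⟨a, b⟩
  simp only [Finset.mem_filter, mem_EN, Finset.mem_singleton, Prod.mk.injEq]
  constructor
  · rintro ⟨(⟨rfl, rfl⟩ | ⟨j, hj1, hj2, rfl, (rfl | rfl)⟩ |
      ⟨i', hi1, hi2, (⟨rfl, (rfl | rfl)⟩ | ⟨rfl, rfl⟩)⟩), h⟩ <;> omega
  · rintro ⟨rfl, rfl⟩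
    exact ⟨Or.inr (Or.inr ⟨i, h1, h2, Or.inr ⟨rfl, rfl⟩⟩), rfl⟩


/-! #### Degrees of `N` -/

lemma NG_out_root {k : ℕ} : (NG k).outDeg 0 = 1 := by
  unfold Dgraph.outDeg
  rw [Finset.filter_congr_decidable, show (NG k).edges = EN k from rfl, NG_of_root]; rfl

lemma NG_in_root {k : ℕ} : (NG k).inDeg 0 = 0 := by
  unfold Dgraph.inDeg
  rw [Finset.filter_congr_decidable, show (NG k).edges = EN k from rfl, NG_if_root]; rfl

lemma NG_out_spine {k j : ℕ} (h1 : 1 ≤ j) (h2 : j ≤ 3*k) : (NG k).outDeg (10*j) = 2 := by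
  unfold Dgraph.outDeg
  rw [Finset.filter_congr_decidable, show (NG k).edges = EN k from rfl, NG_of_spine h1 h2]
  exact Finset.card_pair (by intro h; injection h with h1' h2'; omega)

lemma NG_in_spine {k j : ℕ} (h1 : 1 ≤ j) (h2 : j ≤ 3*k+1) : (NG k).inDeg (10*j) = 1 := by
  unfold Dgraph.inDeg
  rw [Finset.filter_congr_decidable, show (NG k).edges = EN k from rfl, NG_if_spine h1 h2]; rfl

lemma NG_out_leaf {k v : ℕ} (hv : v ∈ XS k) : (NG k).outDeg v = 0 := by
  unfold Dgraph.outDeg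
  rw [Finset.filter_congr_decidable, show (NG k).edges = EN k from rfl, NG_of_leaf hv]; rfl

lemma NG_out_A {k i : ℕ} (h1 : 1 ≤ i) (h2 : i ≤ k) : (NG k).outDeg (20*i+1) = 2 := by
  unfold Dgraph.outDeg
  rw [Finset.filter_congr_decidable, show (NG k).edges = EN k from rfl, NG_of_A h1 h2]
  exact Finset.card_pair (by intro h; injection h with h1' h2'; omega)

lemma NG_in_A {k i : ℕ} (h1 : 1 ≤ i) (h2 : i ≤ k) : (NG k).inDeg (20*i+1) = 1 := by
  unfold Dgraph.inDeg
  rw [Finset.filter_congr_decidable, show (NG k).edges = EN k from rfl, NG_if_A h1 h2]; rfl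

lemma NG_out_r {k i : ℕ} (h1 : 1 ≤ i) (h2 : i ≤ k) : (NG k).outDeg (20*k+10*i+1) = 1 := by
  unfold Dgraph.outDeg
  rw [Finset.filter_congr_decidable, show (NG k).edges = EN k from rfl, NG_of_r h1 h2]; rfl

lemma NG_in_r {k i : ℕ} (h1 : 1 ≤ i) (h2 : i ≤ k) : (NG k).inDeg (20*k+10*i+1) = 2 := by
  unfold Dgraph.inDeg
  rw [Finset.filter_congr_decidable, show (NG k).edges = EN k from rfl, NG_if_r h1 h2]
  exact Finset.card_pair (by intro h; injection h with h1' h2'; omega)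

lemma NG_in_x {k i : ℕ} (h1 : 1 ≤ i) (h2 : i ≤ k) : (NG k).inDeg (20*i-9) = 1 := by
  unfold Dgraph.inDeg
  rw [Finset.filter_congr_decidable, show (NG k).edges = EN k from rfl, NG_if_x h1 h2]; rfl

lemma NG_in_y {k i : ℕ} (h1 : 1 ≤ i) (h2 : i ≤ k) : (NG k).inDeg (20*i+2) = 1 := by
  unfold Dgraph.inDeg
  rw [Finset.filter_congr_decidable, show (NG k).edges = EN k from rfl, NG_if_y h1 h2]; rfl

lemma NG_in_z {k i : ℕ} (h1 : 1 ≤ i) (h2 : i ≤ k) : (NG k).inDeg (20*k+10*i+2) = 1 := by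
  unfold Dgraph.inDeg
  rw [Finset.filter_congr_decidable, show (NG k).edges = EN k from rfl, NG_if_z h1 h2]; rfl

/-! #### Reachability in `N` -/

lemma NG_reach_spine {k j : ℕ} (h1 : 1 ≤ j) (h2 : j ≤ 3*k+1) : (NG k).Reaches 0 (10*j) := by
  induction j with
  | zero => omega
  | succ n ih =>
    rcases Nat.eq_or_lt_of_le h1 with h | h
    · have he : ((0 : ℕ), 10) ∈ EN k := mem_EN.mpr (Or.inl ⟨rfl, rfl⟩)
      have : 10*(n+1) = 10 := by omega
      rw [this]
      exact Relation.ReflTransGen.single he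
    · have hn : 1 ≤ n := by omega
      have ih' := ih hn (by omega)
      have he : ((10*n : ℕ), 10*n+10) ∈ EN k :=
        mem_EN.mpr (Or.inr (Or.inl ⟨n, hn, by omega, rfl, Or.inl rfl⟩))
      have hrw : 10*(n+1) = 10*n+10 := by ring
      rw [hrw]
      exact ih'.tail he

lemma NG_reach_off {k j : ℕ} (h1 : 1 ≤ j) (h2 : j ≤ 3*k) : (NG k).Reaches 0 (10*j+1) := by
  have he : ((10*j : ℕ), 10*j+1) ∈ EN k :=
    mem_EN.mpr (Or.inr (Or.inl ⟨j, h1, h2, rfl, Or.inr rfl⟩))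
  exact (NG_reach_spine h1 (by omega)).tail he

lemma NG_reach {k : ℕ} : ∀ v ∈ VN k, (NG k).Reaches 0 v := by
  intro v hv
  rw [mem_VN] at hv
  rcases hv with rfl | ⟨j, h1, h2, rfl⟩ | ⟨j, h1, h2, rfl⟩ | ⟨i, h1, h2, rfl⟩ | ⟨i, h1, h2, rfl⟩
  · exact Relation.ReflTransGen.refl
  · exact NG_reach_spine h1 h2
  · exact NG_reach_off h1 h2
  · have hA : (NG k).Reaches 0 (20*i+1) := by
      have := NG_reach_off (k := k) (j := 2*i) (by omega) (by omega)
      have hrw : 10*(2*i)+1 = 20*i+1 := by ring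
      rwa [hrw] at this
    have he : ((20*i+1 : ℕ), 20*i+2) ∈ EN k :=
      mem_EN.mpr (Or.inr (Or.inr ⟨i, h1, h2, Or.inl ⟨rfl, Or.inl rfl⟩⟩))
    exact hA.tail he
  · have hr : (NG k).Reaches 0 (20*k+10*i+1) := by
      have := NG_reach_off (k := k) (j := 2*k+i) (by omega) (by omega)
      have hrw : 10*(2*k+i)+1 = 20*k+10*i+1 := by ring
      rwa [hrw] at this
    have he : ((20*k+10*i+1 : ℕ), 20*k+10*i+2) ∈ EN k :=
      mem_EN.mpr (Or.inr (Or.inr ⟨i, h1, h2, Or.inr ⟨rfl, rfl⟩⟩))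
    exact hr.tail he

/-! #### `N` as a phylogenetic network -/

lemma XS_sub_VN {k : ℕ} : XS k ⊆ VN k := by
  intro v hv
  rw [mem_XS] at hv
  rw [mem_VN]
  rcases hv with rfl | ⟨i, h1, h2, rfl⟩ | ⟨i, h1, h2, rfl⟩ | ⟨i, h1, h2, rfl⟩
  · exact Or.inr (Or.inl ⟨3*k+1, by omega, by omega, by omega⟩)
  · exact Or.inr (Or.inr (Or.inl ⟨2*i-1, by omega, by omega, by omega⟩))
  · exact Or.inr (Or.inr (Or.inr (Or.inl ⟨i, h1, h2, rfl⟩)))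
  · exact Or.inr (Or.inr (Or.inr (Or.inr ⟨i, h1, h2, rfl⟩)))

lemma NG_leaves {k : ℕ} : (NG k).leaves = XS k := by
  ext v
  rw [Dgraph.leaves, Finset.mem_filter]
  constructor
  · rintro ⟨hv, hdeg⟩
    rw [show (NG k).verts = VN k from rfl, mem_VN] at hv
    rcases hv with rfl | ⟨j, h1, h2, rfl⟩ | ⟨j, h1, h2, rfl⟩ | ⟨i, h1, h2, rfl⟩ | ⟨i, h1, h2, rfl⟩
    · rw [NG_out_root] at hdeg; omega
    · rcases Nat.lt_or_ge j (3*k+1) with h | h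
      · rw [NG_out_spine h1 (by omega)] at hdeg; omega
      · rw [mem_XS]; exact Or.inl (by omega)
    · rcases Nat.lt_or_ge (2*k) j with h | h
      · -- reticulation r_i, i = j - 2k : outdeg 1
        have : (NG k).outDeg (20*k+10*(j-2*k)+1) = 1 := NG_out_r (by omega) (by omega)
        have hrw : 20*k+10*(j-2*k)+1 = 10*j+1 := by omega
        rw [hrw] at this; omega
      · rcases Nat.even_or_odd j with ⟨i, hi⟩ | ⟨i, hi⟩
        · -- A_i with j = 2i
          have : (NG k).outDeg (20*i+1) = 2 := NG_out_A (by omega) (by omega)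
          have hrw : 20*i+1 = 10*j+1 := by omega
          rw [hrw] at this; omega
        · -- x_{i+1} with j = 2i+1
          rw [mem_XS]
          exact Or.inr (Or.inl ⟨i+1, by omega, by omega, by omega⟩)
    · rw [mem_XS]; exact Or.inr (Or.inr (Or.inl ⟨i, h1, h2, rfl⟩))
    · rw [mem_XS]; exact Or.inr (Or.inr (Or.inr ⟨i, h1, h2, rfl⟩))
  · intro hv
    exact ⟨XS_sub_VN hv, NG_out_leaf hv⟩

def NN (k : ℕ) (hk : 1 ≤ k) : PhyloNet ℕ (XS k) where
  G := NG k
  root := 0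
  root_mem := by rw [show (NG k).verts = VN k from rfl, mem_VN]; exact Or.inl rfl
  root_inDeg := NG_in_root
  root_outDeg := NG_out_root
  acyclic := by
    apply acyclic_of_mono
    rintro ⟨a, b⟩ he
    rw [show (NG k).edges = EN k from rfl, mem_EN] at he
    rcases he with ⟨rfl, rfl⟩ | ⟨j, h1, h2, rfl, (rfl | rfl)⟩ |
      ⟨i, h1, h2, (⟨rfl, (rfl | rfl)⟩ | ⟨rfl, rfl⟩)⟩ <;> simp <;> omega
  reach := NG_reach
  degrees := by
    intro v hv hne
    rw [show (NG k).verts = VN k from rfl, mem_VN] at hv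
    rcases hv with rfl | ⟨j, h1, h2, rfl⟩ | ⟨j, h1, h2, rfl⟩ | ⟨i, h1, h2, rfl⟩ | ⟨i, h1, h2, rfl⟩
    · exact absurd rfl hne
    · rcases Nat.lt_or_ge j (3*k+1) with h | h
      · exact Or.inl ⟨NG_in_spine h1 h2, NG_out_spine h1 (by omega)⟩
      · refine Or.inr (Or.inr ⟨NG_in_spine h1 h2, ?_⟩)
        apply NG_out_leaf
        rw [mem_XS]; exact Or.inl (by omega)
    · rcases Nat.lt_or_ge (2*k) j with h | h
      · refine Or.inr (Or.inl ?_)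
        have h1' : 1 ≤ j - 2*k := by omega
        have h2' : j - 2*k ≤ k := by omega
        have hrw : 20*k+10*(j-2*k)+1 = 10*j+1 := by omega
        constructor
        · have := NG_in_r h1' h2'; rwa [hrw] at this
        · have := NG_out_r h1' h2'; rwa [hrw] at this
      · rcases Nat.even_or_odd j with ⟨i, hi⟩ | ⟨i, hi⟩
        · refine Or.inl ?_
          have hrw : 20*i+1 = 10*j+1 := by omega
          constructor
          · have := NG_in_A (k := k) (i := i) (by omega) (by omega); rwa [hrw] at this
          · have := NG_out_A (k := k) (i := i) (by omega) (by omega); rwa [hrw] at this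
        · refine Or.inr (Or.inr ?_)
          have hrw : 20*(i+1)-9 = 10*j+1 := by omega
          have hx : (10*j+1) ∈ XS k := by
            rw [mem_XS]; exact Or.inr (Or.inl ⟨i+1, by omega, by omega, by omega⟩)
          constructor
          · have := NG_in_x (k := k) (i := i+1) (by omega) (by omega); rwa [hrw] at this
          · exact NG_out_leaf hx
    · have hv : 20*i+2 ∈ XS k := by
        rw [mem_XS]; exact Or.inr (Or.inr (Or.inl ⟨i, h1, h2, rfl⟩))
      exact Or.inr (Or.inr ⟨NG_in_y h1 h2, NG_out_leaf hv⟩)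
    · have hv : 20*k+10*i+2 ∈ XS k := by
        rw [mem_XS]; exact Or.inr (Or.inr (Or.inr ⟨i, h1, h2, rfl⟩))
      exact Or.inr (Or.inr ⟨NG_in_z h1 h2, NG_out_leaf hv⟩)
  leaves_eq := NG_leaves
  Xnonempty := ⟨30*k+10, by rw [mem_XS]; exact Or.inl rfl⟩


/-! #### Level, cardinality, character -/

lemma NN_level {k : ℕ} (hk : 1 ≤ k) : (NN k hk).IsLevel k := by
  intro H hH
  have hsub : H.verts ⊆ VN k := hH.1.1
  have hs : H.verts.filter (fun v => (NN k hk).IsRetic v) ⊆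
      (Finset.Icc 1 k).image (fun i => 20*k+10*i+1) := by
    intro v hv
    rw [Finset.mem_filter] at hv
    obtain ⟨hv1, hretic⟩ := hv
    have hvv := hsub hv1
    rw [mem_VN] at hvv
    have hretic' : (NG k).inDeg v = 2 := hretic
    rcases hvv with rfl | ⟨j, h1, h2, rfl⟩ | ⟨j, h1, h2, rfl⟩ | ⟨i, h1, h2, rfl⟩ |
      ⟨i, h1, h2, rfl⟩
    · rw [NG_in_root] at hretic'; omega
    · rw [NG_in_spine h1 h2] at hretic'; omega
    · rcases Nat.lt_or_ge (2*k) j with h | h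
      · rw [Finset.mem_image]
        exact ⟨j - 2*k, Finset.mem_Icc.mpr ⟨by omega, by omega⟩, by omega⟩
      · rcases Nat.even_or_odd j with ⟨i, hi⟩ | ⟨i, hi⟩
        · have := NG_in_A (k := k) (i := i) (by omega) (by omega)
          rw [show 20*i+1 = 10*j+1 by omega] at this
          rw [this] at hretic'; omega
        · have := NG_in_x (k := k) (i := i+1) (by omega) (by omega)
          rw [show 20*(i+1)-9 = 10*j+1 by omega] at this
          rw [this] at hretic'; omega
    · rw [NG_in_y h1 h2] at hretic'; omega
    · rw [NG_in_z h1 h2] at hretic'; omega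
  calc (H.verts.filter (fun v => (NN k hk).IsRetic v)).card
      ≤ ((Finset.Icc 1 k).image (fun i => 20*k+10*i+1)).card := Finset.card_le_card hs
    _ ≤ (Finset.Icc 1 k).card := Finset.card_image_le
    _ = k := by rw [Nat.card_Icc]; omega

lemma XS_card {k : ℕ} (hk : 1 ≤ k) : (XS k).card = 3*k+1 := by
  have c1 : ((Finset.Icc 1 k).image fun i => 20*i-9).card = k := by
    rw [Finset.card_image_of_injOn, Nat.card_Icc]
    · omega
    · intro a ha b hb h
      simp only [Finset.coe_Icc, Set.mem_Icc] at ha hb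
      simp only [] at h
      omega
  have c2 : ((Finset.Icc 1 k).image fun i => 20*i+2).card = k := by
    rw [Finset.card_image_of_injOn, Nat.card_Icc]
    · omega
    · intro a ha b hb h
      simp only [Finset.coe_Icc, Set.mem_Icc] at ha hb
      simp only [] at h
      omega
  have c3 : ((Finset.Icc 1 k).image fun i => 20*k+10*i+2).card = k := by
    rw [Finset.card_image_of_injOn, Nat.card_Icc]
    · omega
    · intro a ha b hb h
      simp only [Finset.coe_Icc, Set.mem_Icc] at ha hb
      simp only [] at h
      omega
  have d12 : Disjoint ((Finset.Icc 1 k).image fun i => 20*i-9)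
      ((Finset.Icc 1 k).image fun i => 20*i+2) := by
    rw [Finset.disjoint_left]
    rintro a ha hb
    obtain ⟨i, hi, rfl⟩ := Finset.mem_image.mp ha
    obtain ⟨i', hi', he⟩ := Finset.mem_image.mp hb
    rw [Finset.mem_Icc] at hi hi'
    omega
  have d123 : Disjoint (((Finset.Icc 1 k).image fun i => 20*i-9) ∪
      ((Finset.Icc 1 k).image fun i => 20*i+2))
      ((Finset.Icc 1 k).image fun i => 20*k+10*i+2) := by
    rw [Finset.disjoint_left]
    rintro a ha hb
    obtain ⟨i', hi', he⟩ := Finset.mem_image.mp hb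
    rw [Finset.mem_Icc] at hi'
    rcases Finset.mem_union.mp ha with h | h <;>
      obtain ⟨i, hi, rfl⟩ := Finset.mem_image.mp h <;> rw [Finset.mem_Icc] at hi <;> omega
  have hnm : (30*k+10) ∉ (((Finset.Icc 1 k).image fun i => 20*i-9) ∪
      ((Finset.Icc 1 k).image fun i => 20*i+2)) ∪
      ((Finset.Icc 1 k).image fun i => 20*k+10*i+2) := by
    intro h
    rcases Finset.mem_union.mp h with h | h
    · rcases Finset.mem_union.mp h with h | h <;>
        obtain ⟨i, hi, he⟩ := Finset.mem_image.mp h <;> rw [Finset.mem_Icc] at hi <;> omega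
    · obtain ⟨i, hi, he⟩ := Finset.mem_image.mp h
      rw [Finset.mem_Icc] at hi
      omega
  rw [XS, Finset.card_insert_of_notMem hnm, Finset.card_union_of_disjoint d123,
    Finset.card_union_of_disjoint d12, c1, c2, c3]
  omega

lemma fchar {k : ℕ} (hk : 1 ≤ k) :
    IsCharacter (XS k) (fun v => decide (20*k+10 ≤ v)) := by
  intro c
  cases c
  · refine ⟨20*1-9, ?_, ?_⟩
    · rw [mem_XS]; exact Or.inr (Or.inl ⟨1, le_refl 1, hk, rfl⟩)
    · simp only [decide_eq_false_iff_not]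
      omega
  · refine ⟨30*k+10, ?_, ?_⟩
    · rw [mem_XS]; exact Or.inl rfl
    · simp only [decide_eq_true_eq]
      omega


/-! #### The tree `T` (using all reticulation edges from the `A_i` side) -/

def ET (k : ℕ) : Finset (ℕ × ℕ) :=
  insert (0, 10) (insert (20*k, 30*k+10)
    ((((Finset.Icc 1 (2*k-1)).image fun j => (10*j, 10*j+10)) ∪
      ((Finset.Icc 1 (2*k)).image fun j => (10*j, 10*j+1))) ∪
     ((Finset.Icc 1 k).biUnion fun i => {(20*i+1, 20*i+2), (20*i+1, 20*k+10*i+2)})))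

def VT (k : ℕ) : Finset ℕ :=
  insert 0 (insert (30*k+10)
    ((((Finset.Icc 1 (2*k)).image fun j => 10*j) ∪
      ((Finset.Icc 1 (2*k)).image fun j => 10*j+1)) ∪
     (((Finset.Icc 1 k).image fun i => 20*i+2) ∪
      ((Finset.Icc 1 k).image fun i => 20*k+10*i+2))))

lemma mem_ET {k a b : ℕ} : (a, b) ∈ ET k ↔
    (a = 0 ∧ b = 10) ∨ (a = 20*k ∧ b = 30*k+10) ∨
    (∃ j, 1 ≤ j ∧ j ≤ 2*k-1 ∧ a = 10*j ∧ b = 10*j+10) ∨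
    (∃ j, 1 ≤ j ∧ j ≤ 2*k ∧ a = 10*j ∧ b = 10*j+1) ∨
    (∃ i, 1 ≤ i ∧ i ≤ k ∧ a = 20*i+1 ∧ (b = 20*i+2 ∨ b = 20*k+10*i+2)) := by
  simp only [ET, Finset.mem_insert, Finset.mem_union, Finset.mem_biUnion, Finset.mem_image,
    Finset.mem_Icc, Finset.mem_singleton, Prod.mk.injEq]
  constructor
  · rintro (⟨rfl, rfl⟩ | ⟨rfl, rfl⟩ | ((⟨j, ⟨h1, h2⟩, rfl, rfl⟩ | ⟨j, ⟨h1, h2⟩, rfl, rfl⟩) |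
      ⟨i, ⟨h1, h2⟩, (⟨rfl, rfl⟩ | ⟨rfl, rfl⟩)⟩))
    · exact Or.inl ⟨rfl, rfl⟩
    · exact Or.inr (Or.inl ⟨rfl, rfl⟩)
    · exact Or.inr (Or.inr (Or.inl ⟨j, h1, h2, rfl, rfl⟩))
    · exact Or.inr (Or.inr (Or.inr (Or.inl ⟨j, h1, h2, rfl, rfl⟩)))
    · exact Or.inr (Or.inr (Or.inr (Or.inr ⟨i, h1, h2, rfl, Or.inl rfl⟩)))
    · exact Or.inr (Or.inr (Or.inr (Or.inr ⟨i, h1, h2, rfl, Or.inr rfl⟩)))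
  · rintro (⟨rfl, rfl⟩ | ⟨rfl, rfl⟩ | ⟨j, h1, h2, rfl, rfl⟩ | ⟨j, h1, h2, rfl, rfl⟩ |
      ⟨i, h1, h2, rfl, (rfl | rfl)⟩)
    · exact Or.inl ⟨rfl, rfl⟩
    · exact Or.inr (Or.inl ⟨rfl, rfl⟩)
    · exact Or.inr (Or.inr (Or.inl (Or.inl ⟨j, ⟨h1, h2⟩, rfl, rfl⟩)))
    · exact Or.inr (Or.inr (Or.inl (Or.inr ⟨j, ⟨h1, h2⟩, rfl, rfl⟩)))
    · exact Or.inr (Or.inr (Or.inr ⟨i, ⟨h1, h2⟩, Or.inl ⟨rfl, rfl⟩⟩))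
    · exact Or.inr (Or.inr (Or.inr ⟨i, ⟨h1, h2⟩, Or.inr ⟨rfl, rfl⟩⟩))

lemma mem_VT {k v : ℕ} : v ∈ VT k ↔
    v = 0 ∨ v = 30*k+10 ∨ (∃ j, 1 ≤ j ∧ j ≤ 2*k ∧ v = 10*j) ∨
    (∃ j, 1 ≤ j ∧ j ≤ 2*k ∧ v = 10*j+1) ∨
    (∃ i, 1 ≤ i ∧ i ≤ k ∧ v = 20*i+2) ∨ (∃ i, 1 ≤ i ∧ i ≤ k ∧ v = 20*k+10*i+2) := by
  simp only [VT, Finset.mem_insert, Finset.mem_union, Finset.mem_image, Finset.mem_Icc]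
  constructor
  · rintro (rfl | rfl | ((⟨j, ⟨h1, h2⟩, rfl⟩ | ⟨j, ⟨h1, h2⟩, rfl⟩) |
      (⟨i, ⟨h1, h2⟩, rfl⟩ | ⟨i, ⟨h1, h2⟩, rfl⟩)))
    · exact Or.inl rfl
    · exact Or.inr (Or.inl rfl)
    · exact Or.inr (Or.inr (Or.inl ⟨j, h1, h2, rfl⟩))
    · exact Or.inr (Or.inr (Or.inr (Or.inl ⟨j, h1, h2, rfl⟩)))
    · exact Or.inr (Or.inr (Or.inr (Or.inr (Or.inl ⟨i, h1, h2, rfl⟩))))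
    · exact Or.inr (Or.inr (Or.inr (Or.inr (Or.inr ⟨i, h1, h2, rfl⟩))))
  · rintro (rfl | rfl | ⟨j, h1, h2, rfl⟩ | ⟨j, h1, h2, rfl⟩ | ⟨i, h1, h2, rfl⟩ |
      ⟨i, h1, h2, rfl⟩)
    · exact Or.inl rfl
    · exact Or.inr (Or.inl rfl)
    · exact Or.inr (Or.inr (Or.inl (Or.inl ⟨j, ⟨h1, h2⟩, rfl⟩)))
    · exact Or.inr (Or.inr (Or.inl (Or.inr ⟨j, ⟨h1, h2⟩, rfl⟩)))
    · exact Or.inr (Or.inr (Or.inr (Or.inl ⟨i, ⟨h1, h2⟩, rfl⟩)))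
    · exact Or.inr (Or.inr (Or.inr (Or.inr ⟨i, ⟨h1, h2⟩, rfl⟩)))

def TG (k : ℕ) (hk : 1 ≤ k) : Dgraph ℕ where
  verts := VT k
  edges := ET k
  edges_sub := by
    rintro ⟨a, b⟩ he
    rw [mem_ET] at he
    constructor <;> rw [mem_VT]
    · rcases he with ⟨rfl, rfl⟩ | ⟨rfl, rfl⟩ | ⟨j, h1, h2, rfl, rfl⟩ | ⟨j, h1, h2, rfl, rfl⟩ |
        ⟨i, h1, h2, rfl, _⟩
      · exact Or.inl rfl
      · exact Or.inr (Or.inr (Or.inl ⟨2*k, by omega, by omega, by omega⟩))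
      · exact Or.inr (Or.inr (Or.inl ⟨j, h1, by omega, rfl⟩))
      · exact Or.inr (Or.inr (Or.inl ⟨j, h1, h2, rfl⟩))
      · exact Or.inr (Or.inr (Or.inr (Or.inl ⟨2*i, by omega, by omega, by omega⟩)))
    · rcases he with ⟨rfl, rfl⟩ | ⟨rfl, rfl⟩ | ⟨j, h1, h2, rfl, rfl⟩ | ⟨j, h1, h2, rfl, rfl⟩ |
        ⟨i, h1, h2, rfl, (rfl | rfl)⟩
      · exact Or.inr (Or.inr (Or.inl ⟨1, by omega, by omega, by omega⟩))
      · exact Or.inr (Or.inl rfl)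
      · exact Or.inr (Or.inr (Or.inl ⟨j+1, by omega, by omega, by omega⟩))
      · exact Or.inr (Or.inr (Or.inr (Or.inl ⟨j, h1, h2, rfl⟩)))
      · exact Or.inr (Or.inr (Or.inr (Or.inr (Or.inl ⟨i, h1, h2, rfl⟩))))
      · exact Or.inr (Or.inr (Or.inr (Or.inr (Or.inr ⟨i, h1, h2, rfl⟩))))


/-! #### Filters and degrees for `T` -/

lemma TG_of_root {k : ℕ} (hk : 1 ≤ k) : (ET k).filter (fun e => e.1 = 0) = {(0, 10)} := by
  ext ⟨a, b⟩
  simp only [Finset.mem_filter, mem_ET, Finset.mem_singleton, Prod.mk.injEq]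
  constructor
  · rintro ⟨(⟨rfl, rfl⟩ | ⟨rfl, rfl⟩ | ⟨j, hj1, hj2, rfl, rfl⟩ | ⟨j, hj1, hj2, rfl, rfl⟩ |
      ⟨i, hi1, hi2, rfl, (rfl | rfl)⟩), h⟩ <;> omega
  · rintro ⟨rfl, rfl⟩
    exact ⟨Or.inl ⟨rfl, rfl⟩, rfl⟩

lemma TG_if_root {k : ℕ} : (ET k).filter (fun e => e.2 = 0) = ∅ := by
  rw [Finset.filter_eq_empty_iff]
  rintro ⟨a, b⟩ he
  rw [mem_ET] at he
  rcases he with ⟨rfl, rfl⟩ | ⟨rfl, rfl⟩ | ⟨j, hj1, hj2, rfl, rfl⟩ | ⟨j, hj1, hj2, rfl, rfl⟩ |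
    ⟨i, hi1, hi2, rfl, (rfl | rfl)⟩ <;> simp <;> omega

lemma TG_of_spine {k j : ℕ} (h1 : 1 ≤ j) (h2 : j ≤ 2*k-1) :
    (ET k).filter (fun e => e.1 = 10*j) = {(10*j, 10*j+10), (10*j, 10*j+1)} := by
  ext ⟨a, b⟩
  simp only [Finset.mem_filter, mem_ET, Finset.mem_insert, Finset.mem_singleton, Prod.mk.injEq]
  constructor
  · rintro ⟨(⟨rfl, rfl⟩ | ⟨rfl, rfl⟩ | ⟨j', hj1, hj2, rfl, rfl⟩ | ⟨j', hj1, hj2, rfl, rfl⟩ |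
      ⟨i, hi1, hi2, rfl, (rfl | rfl)⟩), h⟩ <;> omega
  · rintro (⟨rfl, rfl⟩ | ⟨rfl, rfl⟩)
    · exact ⟨Or.inr (Or.inr (Or.inl ⟨j, h1, h2, rfl, rfl⟩)), rfl⟩
    · exact ⟨Or.inr (Or.inr (Or.inr (Or.inl ⟨j, h1, by omega, rfl, rfl⟩))), rfl⟩

lemma TG_of_uk {k : ℕ} (hk : 1 ≤ k) :
    (ET k).filter (fun e => e.1 = 20*k) = {(20*k, 30*k+10), (20*k, 20*k+1)} := by
  ext ⟨a, b⟩
  simp only [Finset.mem_filter, mem_ET, Finset.mem_insert, Finset.mem_singleton, Prod.mk.injEq]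
  constructor
  · rintro ⟨(⟨rfl, rfl⟩ | ⟨rfl, rfl⟩ | ⟨j', hj1, hj2, rfl, rfl⟩ | ⟨j', hj1, hj2, rfl, rfl⟩ |
      ⟨i, hi1, hi2, rfl, (rfl | rfl)⟩), h⟩ <;> omega
  · rintro (⟨rfl, rfl⟩ | ⟨rfl, rfl⟩)
    · exact ⟨Or.inr (Or.inl ⟨rfl, rfl⟩), rfl⟩
    · exact ⟨Or.inr (Or.inr (Or.inr (Or.inl ⟨2*k, by omega, by omega, by omega, by omega⟩))), rfl⟩

lemma TG_if_spine {k j : ℕ} (h1 : 1 ≤ j) (h2 : j ≤ 2*k) :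
    (ET k).filter (fun e => e.2 = 10*j) = {(10*j-10, 10*j)} := by
  ext ⟨a, b⟩
  simp only [Finset.mem_filter, mem_ET, Finset.mem_singleton, Prod.mk.injEq]
  constructor
  · rintro ⟨(⟨rfl, rfl⟩ | ⟨rfl, rfl⟩ | ⟨j', hj1, hj2, rfl, rfl⟩ | ⟨j', hj1, hj2, rfl, rfl⟩ |
      ⟨i, hi1, hi2, rfl, (rfl | rfl)⟩), h⟩ <;> omega
  · rintro ⟨rfl, rfl⟩
    rcases Nat.eq_or_lt_of_le h1 with h | h
    · exact ⟨Or.inl ⟨by omega, by omega⟩, rfl⟩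
    · exact ⟨Or.inr (Or.inr (Or.inl ⟨j-1, by omega, by omega, by omega, by omega⟩)), rfl⟩

lemma TG_if_W {k : ℕ} : (ET k).filter (fun e => e.2 = 30*k+10) = {(20*k, 30*k+10)} := by
  ext ⟨a, b⟩
  simp only [Finset.mem_filter, mem_ET, Finset.mem_singleton, Prod.mk.injEq]
  constructor
  · rintro ⟨(⟨rfl, rfl⟩ | ⟨rfl, rfl⟩ | ⟨j', hj1, hj2, rfl, rfl⟩ | ⟨j', hj1, hj2, rfl, rfl⟩ |
      ⟨i, hi1, hi2, rfl, (rfl | rfl)⟩), h⟩ <;> omega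
  · rintro ⟨rfl, rfl⟩
    exact ⟨Or.inr (Or.inl ⟨rfl, rfl⟩), rfl⟩

lemma TG_of_leaf {k v : ℕ} (hk : 1 ≤ k) (hv : v ∈ XS k) :
    (ET k).filter (fun e => e.1 = v) = ∅ := by
  rw [Finset.filter_eq_empty_iff]
  rw [mem_XS] at hv
  rintro ⟨a, b⟩ he
  rw [mem_ET] at he
  rcases hv with rfl | ⟨i', hi1', hi2', rfl⟩ | ⟨i', hi1', hi2', rfl⟩ | ⟨i', hi1', hi2', rfl⟩ <;>
  rcases he with ⟨rfl, rfl⟩ | ⟨rfl, rfl⟩ | ⟨j, hj1, hj2, rfl, rfl⟩ | ⟨j, hj1, hj2, rfl, rfl⟩ |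
    ⟨i, hi1, hi2, rfl, (rfl | rfl)⟩ <;> simp <;> omega

lemma TG_of_A {k i : ℕ} (h1 : 1 ≤ i) (h2 : i ≤ k) :
    (ET k).filter (fun e => e.1 = 20*i+1) = {(20*i+1, 20*i+2), (20*i+1, 20*k+10*i+2)} := by
  ext ⟨a, b⟩
  simp only [Finset.mem_filter, mem_ET, Finset.mem_insert, Finset.mem_singleton, Prod.mk.injEq]
  constructor
  · rintro ⟨(⟨rfl, rfl⟩ | ⟨rfl, rfl⟩ | ⟨j', hj1, hj2, rfl, rfl⟩ | ⟨j', hj1, hj2, rfl, rfl⟩ |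
      ⟨i', hi1, hi2, rfl, (rfl | rfl)⟩), h⟩ <;> omega
  · rintro (⟨rfl, rfl⟩ | ⟨rfl, rfl⟩)
    · exact ⟨Or.inr (Or.inr (Or.inr (Or.inr ⟨i, h1, h2, rfl, Or.inl rfl⟩))), rfl⟩
    · exact ⟨Or.inr (Or.inr (Or.inr (Or.inr ⟨i, h1, h2, rfl, Or.inr rfl⟩))), rfl⟩

lemma TG_if_off {k j : ℕ} (h1 : 1 ≤ j) (h2 : j ≤ 2*k) :
    (ET k).filter (fun e => e.2 = 10*j+1) = {(10*j, 10*j+1)} := by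
  ext ⟨a, b⟩
  simp only [Finset.mem_filter, mem_ET, Finset.mem_singleton, Prod.mk.injEq]
  constructor
  · rintro ⟨(⟨rfl, rfl⟩ | ⟨rfl, rfl⟩ | ⟨j', hj1, hj2, rfl, rfl⟩ | ⟨j', hj1, hj2, rfl, rfl⟩ |
      ⟨i, hi1, hi2, rfl, (rfl | rfl)⟩), h⟩ <;> omega
  · rintro ⟨rfl, rfl⟩
    exact ⟨Or.inr (Or.inr (Or.inr (Or.inl ⟨j, h1, h2, rfl, rfl⟩))), rfl⟩

lemma TG_if_y {k i : ℕ} (h1 : 1 ≤ i) (h2 : i ≤ k) :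
    (ET k).filter (fun e => e.2 = 20*i+2) = {(20*i+1, 20*i+2)} := by
  ext ⟨a, b⟩
  simp only [Finset.mem_filter, mem_ET, Finset.mem_singleton, Prod.mk.injEq]
  constructor
  · rintro ⟨(⟨rfl, rfl⟩ | ⟨rfl, rfl⟩ | ⟨j', hj1, hj2, rfl, rfl⟩ | ⟨j', hj1, hj2, rfl, rfl⟩ |
      ⟨i', hi1, hi2, rfl, (rfl | rfl)⟩), h⟩ <;> omega
  · rintro ⟨rfl, rfl⟩
    exact ⟨Or.inr (Or.inr (Or.inr (Or.inr ⟨i, h1, h2, rfl, Or.inl rfl⟩))), rfl⟩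

lemma TG_if_z {k i : ℕ} (h1 : 1 ≤ i) (h2 : i ≤ k) :
    (ET k).filter (fun e => e.2 = 20*k+10*i+2) = {(20*i+1, 20*k+10*i+2)} := by
  ext ⟨a, b⟩
  simp only [Finset.mem_filter, mem_ET, Finset.mem_singleton, Prod.mk.injEq]
  constructor
  · rintro ⟨(⟨rfl, rfl⟩ | ⟨rfl, rfl⟩ | ⟨j', hj1, hj2, rfl, rfl⟩ | ⟨j', hj1, hj2, rfl, rfl⟩ |
      ⟨i', hi1, hi2, rfl, (rfl | rfl)⟩), h⟩ <;> omega
  · rintro ⟨rfl, rfl⟩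
    exact ⟨Or.inr (Or.inr (Or.inr (Or.inr ⟨i, h1, h2, rfl, Or.inr rfl⟩))), rfl⟩


section TTdeg
variable {k : ℕ} (hk : 1 ≤ k)

lemma TG_out_root : (TG k hk).outDeg 0 = 1 := by
  unfold Dgraph.outDeg
  rw [Finset.filter_congr_decidable, show (TG k hk).edges = ET k from rfl, TG_of_root hk]; rfl

lemma TG_in_root : (TG k hk).inDeg 0 = 0 := by
  unfold Dgraph.inDeg
  rw [Finset.filter_congr_decidable, show (TG k hk).edges = ET k from rfl, TG_if_root]; rfl

lemma TG_out_spine {j : ℕ} (h1 : 1 ≤ j) (h2 : j ≤ 2*k-1) : (TG k hk).outDeg (10*j) = 2 := by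
  unfold Dgraph.outDeg
  rw [Finset.filter_congr_decidable, show (TG k hk).edges = ET k from rfl, TG_of_spine h1 h2]
  exact Finset.card_pair (by intro h; injection h with h1' h2'; omega)

lemma TG_out_uk : (TG k hk).outDeg (20*k) = 2 := by
  unfold Dgraph.outDeg
  rw [Finset.filter_congr_decidable, show (TG k hk).edges = ET k from rfl, TG_of_uk hk]
  exact Finset.card_pair (by intro h; injection h with h1' h2'; omega)

lemma TG_in_spine {j : ℕ} (h1 : 1 ≤ j) (h2 : j ≤ 2*k) : (TG k hk).inDeg (10*j) = 1 := by
  unfold Dgraph.inDeg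
  rw [Finset.filter_congr_decidable, show (TG k hk).edges = ET k from rfl, TG_if_spine h1 h2]; rfl

lemma TG_in_W : (TG k hk).inDeg (30*k+10) = 1 := by
  unfold Dgraph.inDeg
  rw [Finset.filter_congr_decidable, show (TG k hk).edges = ET k from rfl, TG_if_W]; rfl

lemma TG_out_leaf {v : ℕ} (hv : v ∈ XS k) : (TG k hk).outDeg v = 0 := by
  unfold Dgraph.outDeg
  rw [Finset.filter_congr_decidable, show (TG k hk).edges = ET k from rfl, TG_of_leaf hk hv]; rfl

lemma TG_out_A {i : ℕ} (h1 : 1 ≤ i) (h2 : i ≤ k) : (TG k hk).outDeg (20*i+1) = 2 := by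
  unfold Dgraph.outDeg
  rw [Finset.filter_congr_decidable, show (TG k hk).edges = ET k from rfl, TG_of_A h1 h2]
  exact Finset.card_pair (by intro h; injection h with h1' h2'; omega)

lemma TG_in_off {j : ℕ} (h1 : 1 ≤ j) (h2 : j ≤ 2*k) : (TG k hk).inDeg (10*j+1) = 1 := by
  unfold Dgraph.inDeg
  rw [Finset.filter_congr_decidable, show (TG k hk).edges = ET k from rfl, TG_if_off h1 h2]; rfl

lemma TG_in_y {i : ℕ} (h1 : 1 ≤ i) (h2 : i ≤ k) : (TG k hk).inDeg (20*i+2) = 1 := by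
  unfold Dgraph.inDeg
  rw [Finset.filter_congr_decidable, show (TG k hk).edges = ET k from rfl, TG_if_y h1 h2]; rfl

lemma TG_in_z {i : ℕ} (h1 : 1 ≤ i) (h2 : i ≤ k) : (TG k hk).inDeg (20*k+10*i+2) = 1 := by
  unfold Dgraph.inDeg
  rw [Finset.filter_congr_decidable, show (TG k hk).edges = ET k from rfl, TG_if_z h1 h2]; rfl

lemma TG_reach_spine {j : ℕ} (h1 : 1 ≤ j) (h2 : j ≤ 2*k) : (TG k hk).Reaches 0 (10*j) := by
  induction j with
  | zero => omega
  | succ n ih =>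
    rcases Nat.eq_or_lt_of_le h1 with h | h
    · have he : ((0 : ℕ), 10) ∈ ET k := mem_ET.mpr (Or.inl ⟨rfl, rfl⟩)
      rw [show 10*(n+1) = 10 by omega]
      exact Relation.ReflTransGen.single he
    · have hn : 1 ≤ n := by omega
      have ih' := ih hn (by omega)
      have he : ((10*n : ℕ), 10*n+10) ∈ ET k :=
        mem_ET.mpr (Or.inr (Or.inr (Or.inl ⟨n, hn, by omega, rfl, rfl⟩)))
      rw [show 10*(n+1) = 10*n+10 by ring]
      exact ih'.tail he

lemma TG_reach_off {j : ℕ} (h1 : 1 ≤ j) (h2 : j ≤ 2*k) : (TG k hk).Reaches 0 (10*j+1) := by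
  have he : ((10*j : ℕ), 10*j+1) ∈ ET k :=
    mem_ET.mpr (Or.inr (Or.inr (Or.inr (Or.inl ⟨j, h1, h2, rfl, rfl⟩))))
  exact (TG_reach_spine hk h1 h2).tail he

lemma TG_reach : ∀ v ∈ VT k, (TG k hk).Reaches 0 v := by
  intro v hv
  rw [mem_VT] at hv
  rcases hv with rfl | rfl | ⟨j, h1, h2, rfl⟩ | ⟨j, h1, h2, rfl⟩ | ⟨i, h1, h2, rfl⟩ |
    ⟨i, h1, h2, rfl⟩
  · exact Relation.ReflTransGen.refl
  · have he : ((20*k : ℕ), 30*k+10) ∈ ET k := mem_ET.mpr (Or.inr (Or.inl ⟨rfl, rfl⟩))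
    have := TG_reach_spine hk (k := k) (j := 2*k) (by omega) (by omega)
    rw [show 10*(2*k) = 20*k by ring] at this
    exact this.tail he
  · exact TG_reach_spine hk h1 h2
  · exact TG_reach_off hk h1 h2
  · have hA : (TG k hk).Reaches 0 (20*i+1) := by
      have := TG_reach_off hk (k := k) (j := 2*i) (by omega) (by omega)
      rwa [show 10*(2*i)+1 = 20*i+1 by ring] at this
    have he : ((20*i+1 : ℕ), 20*i+2) ∈ ET k :=
      mem_ET.mpr (Or.inr (Or.inr (Or.inr (Or.inr ⟨i, h1, h2, rfl, Or.inl rfl⟩))))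
    exact hA.tail he
  · have hA : (TG k hk).Reaches 0 (20*i+1) := by
      have := TG_reach_off hk (k := k) (j := 2*i) (by omega) (by omega)
      rwa [show 10*(2*i)+1 = 20*i+1 by ring] at this
    have he : ((20*i+1 : ℕ), 20*k+10*i+2) ∈ ET k :=
      mem_ET.mpr (Or.inr (Or.inr (Or.inr (Or.inr ⟨i, h1, h2, rfl, Or.inr rfl⟩))))
    exact hA.tail he

lemma TG_leaves : (TG k hk).leaves = XS k := by
  ext v
  rw [Dgraph.leaves, Finset.mem_filter]
  constructor
  · rintro ⟨hv, hdeg⟩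
    rw [show (TG k hk).verts = VT k from rfl, mem_VT] at hv
    rcases hv with rfl | rfl | ⟨j, h1, h2, rfl⟩ | ⟨j, h1, h2, rfl⟩ | ⟨i, h1, h2, rfl⟩ |
      ⟨i, h1, h2, rfl⟩
    · rw [TG_out_root hk] at hdeg; omega
    · rw [mem_XS]; exact Or.inl rfl
    · rcases Nat.lt_or_ge j (2*k) with h | h
      · rw [TG_out_spine hk h1 (by omega)] at hdeg; omega
      · have : (TG k hk).outDeg (20*k) = 2 := TG_out_uk hk
        rw [show 20*k = 10*j by omega] at this
        rw [this] at hdeg; omega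
    · rcases Nat.even_or_odd j with ⟨i, hi⟩ | ⟨i, hi⟩
      · have : (TG k hk).outDeg (20*i+1) = 2 := TG_out_A hk (by omega) (by omega)
        rw [show 20*i+1 = 10*j+1 by omega] at this
        rw [this] at hdeg; omega
      · rw [mem_XS]
        exact Or.inr (Or.inl ⟨i+1, by omega, by omega, by omega⟩)
    · rw [mem_XS]; exact Or.inr (Or.inr (Or.inl ⟨i, h1, h2, rfl⟩))
    · rw [mem_XS]; exact Or.inr (Or.inr (Or.inr ⟨i, h1, h2, rfl⟩))
  · intro hv
    refine ⟨?_, TG_out_leaf hk hv⟩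
    rw [show (TG k hk).verts = VT k from rfl, mem_VT]
    rw [mem_XS] at hv
    rcases hv with rfl | ⟨i, h1, h2, rfl⟩ | ⟨i, h1, h2, rfl⟩ | ⟨i, h1, h2, rfl⟩
    · exact Or.inr (Or.inl rfl)
    · exact Or.inr (Or.inr (Or.inr (Or.inl ⟨2*i-1, by omega, by omega, by omega⟩)))
    · exact Or.inr (Or.inr (Or.inr (Or.inr (Or.inl ⟨i, h1, h2, rfl⟩))))
    · exact Or.inr (Or.inr (Or.inr (Or.inr (Or.inr ⟨i, h1, h2, rfl⟩))))

def TT : PhyloNet ℕ (XS k) where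
  G := TG k hk
  root := 0
  root_mem := by rw [show (TG k hk).verts = VT k from rfl, mem_VT]; exact Or.inl rfl
  root_inDeg := TG_in_root hk
  root_outDeg := TG_out_root hk
  acyclic := by
    apply acyclic_of_mono
    rintro ⟨a, b⟩ he
    rw [show (TG k hk).edges = ET k from rfl, mem_ET] at he
    rcases he with ⟨rfl, rfl⟩ | ⟨rfl, rfl⟩ | ⟨j, h1, h2, rfl, rfl⟩ | ⟨j, h1, h2, rfl, rfl⟩ |
      ⟨i, h1, h2, rfl, (rfl | rfl)⟩ <;> simp <;> omega
  reach := TG_reach hk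
  degrees := by
    intro v hv hne
    rw [show (TG k hk).verts = VT k from rfl, mem_VT] at hv
    rcases hv with rfl | rfl | ⟨j, h1, h2, rfl⟩ | ⟨j, h1, h2, rfl⟩ | ⟨i, h1, h2, rfl⟩ |
      ⟨i, h1, h2, rfl⟩
    · exact absurd rfl hne
    · refine Or.inr (Or.inr ⟨TG_in_W hk, TG_out_leaf hk ?_⟩)
      rw [mem_XS]; exact Or.inl rfl
    · rcases Nat.lt_or_ge j (2*k) with h | h
      · exact Or.inl ⟨TG_in_spine hk h1 h2, TG_out_spine hk h1 (by omega)⟩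
      · refine Or.inl ⟨TG_in_spine hk h1 h2, ?_⟩
        have : (TG k hk).outDeg (20*k) = 2 := TG_out_uk hk
        rwa [show 20*k = 10*j by omega] at this
    · rcases Nat.even_or_odd j with ⟨i, hi⟩ | ⟨i, hi⟩
      · refine Or.inl ⟨TG_in_off hk h1 h2, ?_⟩
        have : (TG k hk).outDeg (20*i+1) = 2 := TG_out_A hk (by omega) (by omega)
        rwa [show 20*i+1 = 10*j+1 by omega] at this
      · refine Or.inr (Or.inr ⟨TG_in_off hk h1 h2, TG_out_leaf hk ?_⟩)
        rw [mem_XS]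
        exact Or.inr (Or.inl ⟨i+1, by omega, by omega, by omega⟩)
    · refine Or.inr (Or.inr ⟨TG_in_y hk h1 h2, TG_out_leaf hk ?_⟩)
      rw [mem_XS]; exact Or.inr (Or.inr (Or.inl ⟨i, h1, h2, rfl⟩))
    · refine Or.inr (Or.inr ⟨TG_in_z hk h1 h2, TG_out_leaf hk ?_⟩)
      rw [mem_XS]; exact Or.inr (Or.inr (Or.inr ⟨i, h1, h2, rfl⟩))
  leaves_eq := TG_leaves hk
  Xnonempty := ⟨30*k+10, by rw [mem_XS]; exact Or.inl rfl⟩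

lemma TT_tree : (TT hk).IsTreeNet := by
  intro v hv
  rw [show (TT hk).G.verts = VT k from rfl, mem_VT] at hv
  rcases hv with rfl | rfl | ⟨j, h1, h2, rfl⟩ | ⟨j, h1, h2, rfl⟩ | ⟨i, h1, h2, rfl⟩ |
    ⟨i, h1, h2, rfl⟩
  · rw [show (TT hk).G.inDeg 0 = (TG k hk).inDeg 0 from rfl, TG_in_root hk]
    omega
  · rw [show (TT hk).G.inDeg _ = (TG k hk).inDeg (30*k+10) from rfl, TG_in_W hk]
  · rw [show (TT hk).G.inDeg _ = (TG k hk).inDeg (10*j) from rfl, TG_in_spine hk h1 h2]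
  · rw [show (TT hk).G.inDeg _ = (TG k hk).inDeg (10*j+1) from rfl, TG_in_off hk h1 h2]
  · rw [show (TT hk).G.inDeg _ = (TG k hk).inDeg (20*i+2) from rfl, TG_in_y hk h1 h2]
  · rw [show (TT hk).G.inDeg _ = (TG k hk).inDeg (20*k+10*i+2) from rfl, TG_in_z hk h1 h2]

end TTdeg


/-! #### The tree `T'` (using all reticulation edges from the `q_i` side) -/

def EU (k : ℕ) : Finset (ℕ × ℕ) :=
  insert (0, 10)
    (((Finset.Icc 1 (3*k)).image fun j => (10*j, 10*j+10)) ∪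
     ((Finset.Icc 1 k).biUnion fun i =>
       {(20*i-10, 20*i-9), (20*i, 20*i+2), (20*k+10*i, 20*k+10*i+2)}))

def VU (k : ℕ) : Finset ℕ :=
  insert 0 (((Finset.Icc 1 (3*k+1)).image fun j => 10*j) ∪
    ((Finset.Icc 1 k).biUnion fun i => {20*i-9, 20*i+2, 20*k+10*i+2}))

lemma mem_EU {k a b : ℕ} : (a, b) ∈ EU k ↔
    (a = 0 ∧ b = 10) ∨ (∃ j, 1 ≤ j ∧ j ≤ 3*k ∧ a = 10*j ∧ b = 10*j+10) ∨
    (∃ i, 1 ≤ i ∧ i ≤ k ∧ ((a = 20*i-10 ∧ b = 20*i-9) ∨ (a = 20*i ∧ b = 20*i+2) ∨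
      (a = 20*k+10*i ∧ b = 20*k+10*i+2))) := by
  simp only [EU, Finset.mem_insert, Finset.mem_union, Finset.mem_biUnion, Finset.mem_image,
    Finset.mem_Icc, Finset.mem_singleton, Prod.mk.injEq]
  constructor
  · rintro (⟨rfl, rfl⟩ | (⟨j, ⟨h1, h2⟩, rfl, rfl⟩ |
      ⟨i, ⟨h1, h2⟩, (⟨rfl, rfl⟩ | ⟨rfl, rfl⟩ | ⟨rfl, rfl⟩)⟩))
    · exact Or.inl ⟨rfl, rfl⟩
    · exact Or.inr (Or.inl ⟨j, h1, h2, rfl, rfl⟩)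
    · exact Or.inr (Or.inr ⟨i, h1, h2, Or.inl ⟨rfl, rfl⟩⟩)
    · exact Or.inr (Or.inr ⟨i, h1, h2, Or.inr (Or.inl ⟨rfl, rfl⟩)⟩)
    · exact Or.inr (Or.inr ⟨i, h1, h2, Or.inr (Or.inr ⟨rfl, rfl⟩)⟩)
  · rintro (⟨rfl, rfl⟩ | ⟨j, h1, h2, rfl, rfl⟩ |
      ⟨i, h1, h2, (⟨rfl, rfl⟩ | ⟨rfl, rfl⟩ | ⟨rfl, rfl⟩)⟩)
    · exact Or.inl ⟨rfl, rfl⟩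
    · exact Or.inr (Or.inl ⟨j, ⟨h1, h2⟩, rfl, rfl⟩)
    · exact Or.inr (Or.inr ⟨i, ⟨h1, h2⟩, Or.inl ⟨rfl, rfl⟩⟩)
    · exact Or.inr (Or.inr ⟨i, ⟨h1, h2⟩, Or.inr (Or.inl ⟨rfl, rfl⟩)⟩)
    · exact Or.inr (Or.inr ⟨i, ⟨h1, h2⟩, Or.inr (Or.inr ⟨rfl, rfl⟩)⟩)

lemma mem_VU {k v : ℕ} : v ∈ VU k ↔
    v = 0 ∨ (∃ j, 1 ≤ j ∧ j ≤ 3*k+1 ∧ v = 10*j) ∨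
    (∃ i, 1 ≤ i ∧ i ≤ k ∧ (v = 20*i-9 ∨ v = 20*i+2 ∨ v = 20*k+10*i+2)) := by
  simp only [VU, Finset.mem_insert, Finset.mem_union, Finset.mem_biUnion, Finset.mem_image,
    Finset.mem_Icc, Finset.mem_singleton]
  constructor
  · rintro (rfl | (⟨j, ⟨h1, h2⟩, rfl⟩ | ⟨i, ⟨h1, h2⟩, (rfl | rfl | rfl)⟩))
    · exact Or.inl rfl
    · exact Or.inr (Or.inl ⟨j, h1, h2, rfl⟩)
    · exact Or.inr (Or.inr ⟨i, h1, h2, Or.inl rfl⟩)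
    · exact Or.inr (Or.inr ⟨i, h1, h2, Or.inr (Or.inl rfl)⟩)
    · exact Or.inr (Or.inr ⟨i, h1, h2, Or.inr (Or.inr rfl)⟩)
  · rintro (rfl | ⟨j, h1, h2, rfl⟩ | ⟨i, h1, h2, (rfl | rfl | rfl)⟩)
    · exact Or.inl rfl
    · exact Or.inr (Or.inl ⟨j, ⟨h1, h2⟩, rfl⟩)
    · exact Or.inr (Or.inr ⟨i, ⟨h1, h2⟩, Or.inl rfl⟩)
    · exact Or.inr (Or.inr ⟨i, ⟨h1, h2⟩, Or.inr (Or.inl rfl)⟩)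
    · exact Or.inr (Or.inr ⟨i, ⟨h1, h2⟩, Or.inr (Or.inr rfl)⟩)

def UG (k : ℕ) (hk : 1 ≤ k) : Dgraph ℕ where
  verts := VU k
  edges := EU k
  edges_sub := by
    rintro ⟨a, b⟩ he
    rw [mem_EU] at he
    constructor <;> rw [mem_VU]
    · rcases he with ⟨rfl, rfl⟩ | ⟨j, h1, h2, rfl, rfl⟩ |
        ⟨i, h1, h2, (⟨rfl, rfl⟩ | ⟨rfl, rfl⟩ | ⟨rfl, rfl⟩)⟩
      · exact Or.inl rfl
      · exact Or.inr (Or.inl ⟨j, h1, by omega, rfl⟩)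
      · exact Or.inr (Or.inl ⟨2*i-1, by omega, by omega, by omega⟩)
      · exact Or.inr (Or.inl ⟨2*i, by omega, by omega, by omega⟩)
      · exact Or.inr (Or.inl ⟨2*k+i, by omega, by omega, by omega⟩)
    · rcases he with ⟨rfl, rfl⟩ | ⟨j, h1, h2, rfl, rfl⟩ |
        ⟨i, h1, h2, (⟨rfl, rfl⟩ | ⟨rfl, rfl⟩ | ⟨rfl, rfl⟩)⟩
      · exact Or.inr (Or.inl ⟨1, by omega, by omega, by omega⟩)
      · exact Or.inr (Or.inl ⟨j+1, by omega, by omega, by omega⟩)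
      · exact Or.inr (Or.inr ⟨i, h1, h2, Or.inl rfl⟩)
      · exact Or.inr (Or.inr ⟨i, h1, h2, Or.inr (Or.inl rfl)⟩)
      · exact Or.inr (Or.inr ⟨i, h1, h2, Or.inr (Or.inr rfl)⟩)

lemma UG_of_root {k : ℕ} (hk : 1 ≤ k) : (EU k).filter (fun e => e.1 = 0) = {(0, 10)} := by
  ext ⟨a, b⟩
  simp only [Finset.mem_filter, mem_EU, Finset.mem_singleton, Prod.mk.injEq]
  constructor
  · rintro ⟨(⟨rfl, rfl⟩ | ⟨j, hj1, hj2, rfl, rfl⟩ |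
      ⟨i, hi1, hi2, (⟨rfl, rfl⟩ | ⟨rfl, rfl⟩ | ⟨rfl, rfl⟩)⟩), h⟩ <;> omega
  · rintro ⟨rfl, rfl⟩
    exact ⟨Or.inl ⟨rfl, rfl⟩, rfl⟩

lemma UG_if_root {k : ℕ} : (EU k).filter (fun e => e.2 = 0) = ∅ := by
  rw [Finset.filter_eq_empty_iff]
  rintro ⟨a, b⟩ he
  rw [mem_EU] at he
  rcases he with ⟨rfl, rfl⟩ | ⟨j, hj1, hj2, rfl, rfl⟩ |
    ⟨i, hi1, hi2, (⟨rfl, rfl⟩ | ⟨rfl, rfl⟩ | ⟨rfl, rfl⟩)⟩ <;> simp <;> omega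

lemma UG_of_sx {k i : ℕ} (h1 : 1 ≤ i) (h2 : i ≤ k) :
    (EU k).filter (fun e => e.1 = 20*i-10) = {(20*i-10, 20*i), (20*i-10, 20*i-9)} := by
  ext ⟨a, b⟩
  simp only [Finset.mem_filter, mem_EU, Finset.mem_insert, Finset.mem_singleton, Prod.mk.injEq]
  constructor
  · rintro ⟨(⟨rfl, rfl⟩ | ⟨j, hj1, hj2, rfl, rfl⟩ |
      ⟨i', hi1, hi2, (⟨rfl, rfl⟩ | ⟨rfl, rfl⟩ | ⟨rfl, rfl⟩)⟩), h⟩ <;> omega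
  · rintro (⟨rfl, rfl⟩ | ⟨rfl, rfl⟩)
    · exact ⟨Or.inr (Or.inl ⟨2*i-1, by omega, by omega, by omega, by omega⟩), rfl⟩
    · exact ⟨Or.inr (Or.inr ⟨i, h1, h2, Or.inl ⟨rfl, rfl⟩⟩), rfl⟩

lemma UG_of_sy {k i : ℕ} (h1 : 1 ≤ i) (h2 : i ≤ k) :
    (EU k).filter (fun e => e.1 = 20*i) = {(20*i, 20*i+10), (20*i, 20*i+2)} := by
  ext ⟨a, b⟩
  simp only [Finset.mem_filter, mem_EU, Finset.mem_insert, Finset.mem_singleton, Prod.mk.injEq]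
  constructor
  · rintro ⟨(⟨rfl, rfl⟩ | ⟨j, hj1, hj2, rfl, rfl⟩ |
      ⟨i', hi1, hi2, (⟨rfl, rfl⟩ | ⟨rfl, rfl⟩ | ⟨rfl, rfl⟩)⟩), h⟩ <;> omega
  · rintro (⟨rfl, rfl⟩ | ⟨rfl, rfl⟩)
    · exact ⟨Or.inr (Or.inl ⟨2*i, by omega, by omega, by omega, by omega⟩), rfl⟩
    · exact ⟨Or.inr (Or.inr ⟨i, h1, h2, Or.inr (Or.inl ⟨rfl, rfl⟩)⟩), rfl⟩

lemma UG_of_q {k i : ℕ} (h1 : 1 ≤ i) (h2 : i ≤ k) :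
    (EU k).filter (fun e => e.1 = 20*k+10*i) =
      {(20*k+10*i, 20*k+10*i+10), (20*k+10*i, 20*k+10*i+2)} := by
  ext ⟨a, b⟩
  simp only [Finset.mem_filter, mem_EU, Finset.mem_insert, Finset.mem_singleton, Prod.mk.injEq]
  constructor
  · rintro ⟨(⟨rfl, rfl⟩ | ⟨j, hj1, hj2, rfl, rfl⟩ |
      ⟨i', hi1, hi2, (⟨rfl, rfl⟩ | ⟨rfl, rfl⟩ | ⟨rfl, rfl⟩)⟩), h⟩ <;> omega
  · rintro (⟨rfl, rfl⟩ | ⟨rfl, rfl⟩)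
    · exact ⟨Or.inr (Or.inl ⟨2*k+i, by omega, by omega, by omega, by omega⟩), rfl⟩
    · exact ⟨Or.inr (Or.inr ⟨i, h1, h2, Or.inr (Or.inr ⟨rfl, rfl⟩)⟩), rfl⟩

lemma UG_if_spine {k j : ℕ} (h1 : 1 ≤ j) (h2 : j ≤ 3*k+1) :
    (EU k).filter (fun e => e.2 = 10*j) = {(10*j-10, 10*j)} := by
  ext ⟨a, b⟩
  simp only [Finset.mem_filter, mem_EU, Finset.mem_singleton, Prod.mk.injEq]
  constructor
  · rintro ⟨(⟨rfl, rfl⟩ | ⟨j', hj1, hj2, rfl, rfl⟩ |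
      ⟨i', hi1, hi2, (⟨rfl, rfl⟩ | ⟨rfl, rfl⟩ | ⟨rfl, rfl⟩)⟩), h⟩ <;> omega
  · rintro ⟨rfl, rfl⟩
    rcases Nat.eq_or_lt_of_le h1 with h | h
    · exact ⟨Or.inl ⟨by omega, by omega⟩, rfl⟩
    · exact ⟨Or.inr (Or.inl ⟨j-1, by omega, by omega, by omega, by omega⟩), rfl⟩

lemma UG_of_leaf {k v : ℕ} (hk : 1 ≤ k) (hv : v ∈ XS k) :
    (EU k).filter (fun e => e.1 = v) = ∅ := by
  rw [Finset.filter_eq_empty_iff]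
  rw [mem_XS] at hv
  rintro ⟨a, b⟩ he
  rw [mem_EU] at he
  rcases hv with rfl | ⟨i', hi1', hi2', rfl⟩ | ⟨i', hi1', hi2', rfl⟩ | ⟨i', hi1', hi2', rfl⟩ <;>
  rcases he with ⟨rfl, rfl⟩ | ⟨j, hj1, hj2, rfl, rfl⟩ |
    ⟨i, hi1, hi2, (⟨rfl, rfl⟩ | ⟨rfl, rfl⟩ | ⟨rfl, rfl⟩)⟩ <;> simp <;> omega

lemma UG_if_x {k i : ℕ} (h1 : 1 ≤ i) (h2 : i ≤ k) :
    (EU k).filter (fun e => e.2 = 20*i-9) = {(20*i-10, 20*i-9)} := by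
  ext ⟨a, b⟩
  simp only [Finset.mem_filter, mem_EU, Finset.mem_singleton, Prod.mk.injEq]
  constructor
  · rintro ⟨(⟨rfl, rfl⟩ | ⟨j, hj1, hj2, rfl, rfl⟩ |
      ⟨i', hi1, hi2, (⟨rfl, rfl⟩ | ⟨rfl, rfl⟩ | ⟨rfl, rfl⟩)⟩), h⟩ <;> omega
  · rintro ⟨rfl, rfl⟩
    exact ⟨Or.inr (Or.inr ⟨i, h1, h2, Or.inl ⟨rfl, rfl⟩⟩), rfl⟩

lemma UG_if_y {k i : ℕ} (h1 : 1 ≤ i) (h2 : i ≤ k) :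
    (EU k).filter (fun e => e.2 = 20*i+2) = {(20*i, 20*i+2)} := by
  ext ⟨a, b⟩
  simp only [Finset.mem_filter, mem_EU, Finset.mem_singleton, Prod.mk.injEq]
  constructor
  · rintro ⟨(⟨rfl, rfl⟩ | ⟨j, hj1, hj2, rfl, rfl⟩ |
      ⟨i', hi1, hi2, (⟨rfl, rfl⟩ | ⟨rfl, rfl⟩ | ⟨rfl, rfl⟩)⟩), h⟩ <;> omega
  · rintro ⟨rfl, rfl⟩
    exact ⟨Or.inr (Or.inr ⟨i, h1, h2, Or.inr (Or.inl ⟨rfl, rfl⟩)⟩), rfl⟩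

lemma UG_if_z {k i : ℕ} (h1 : 1 ≤ i) (h2 : i ≤ k) :
    (EU k).filter (fun e => e.2 = 20*k+10*i+2) = {(20*k+10*i, 20*k+10*i+2)} := by
  ext ⟨a, b⟩
  simp only [Finset.mem_filter, mem_EU, Finset.mem_singleton, Prod.mk.injEq]
  constructor
  · rintro ⟨(⟨rfl, rfl⟩ | ⟨j, hj1, hj2, rfl, rfl⟩ |
      ⟨i', hi1, hi2, (⟨rfl, rfl⟩ | ⟨rfl, rfl⟩ | ⟨rfl, rfl⟩)⟩), h⟩ <;> omega
  · rintro ⟨rfl, rfl⟩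
    exact ⟨Or.inr (Or.inr ⟨i, h1, h2, Or.inr (Or.inr ⟨rfl, rfl⟩)⟩), rfl⟩


section UUdeg
variable {k : ℕ} (hk : 1 ≤ k)

lemma UG_out_root : (UG k hk).outDeg 0 = 1 := by
  unfold Dgraph.outDeg
  rw [Finset.filter_congr_decidable, show (UG k hk).edges = EU k from rfl, UG_of_root hk]; rfl

lemma UG_in_root : (UG k hk).inDeg 0 = 0 := by
  unfold Dgraph.inDeg
  rw [Finset.filter_congr_decidable, show (UG k hk).edges = EU k from rfl, UG_if_root]; rfl

lemma UG_out_sx {i : ℕ} (h1 : 1 ≤ i) (h2 : i ≤ k) : (UG k hk).outDeg (20*i-10) = 2 := by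
  unfold Dgraph.outDeg
  rw [Finset.filter_congr_decidable, show (UG k hk).edges = EU k from rfl, UG_of_sx h1 h2]
  exact Finset.card_pair (by intro h; injection h with h1' h2'; omega)

lemma UG_out_sy {i : ℕ} (h1 : 1 ≤ i) (h2 : i ≤ k) : (UG k hk).outDeg (20*i) = 2 := by
  unfold Dgraph.outDeg
  rw [Finset.filter_congr_decidable, show (UG k hk).edges = EU k from rfl, UG_of_sy h1 h2]
  exact Finset.card_pair (by intro h; injection h with h1' h2'; omega)

lemma UG_out_q {i : ℕ} (h1 : 1 ≤ i) (h2 : i ≤ k) : (UG k hk).outDeg (20*k+10*i) = 2 := by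
  unfold Dgraph.outDeg
  rw [Finset.filter_congr_decidable, show (UG k hk).edges = EU k from rfl, UG_of_q h1 h2]
  exact Finset.card_pair (by intro h; injection h with h1' h2'; omega)

lemma UG_out_spine {j : ℕ} (h1 : 1 ≤ j) (h2 : j ≤ 3*k) : (UG k hk).outDeg (10*j) = 2 := by
  rcases Nat.lt_or_ge (2*k) j with h | h
  · have := UG_out_q hk (i := j-2*k) (by omega) (by omega)
    rwa [show 20*k+10*(j-2*k) = 10*j by omega] at this
  · rcases Nat.even_or_odd j with ⟨i, hi⟩ | ⟨i, hi⟩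
    · have := UG_out_sy hk (i := i) (by omega) (by omega)
      rwa [show 20*i = 10*j by omega] at this
    · have := UG_out_sx hk (i := i+1) (by omega) (by omega)
      rwa [show 20*(i+1)-10 = 10*j by omega] at this

lemma UG_in_spine {j : ℕ} (h1 : 1 ≤ j) (h2 : j ≤ 3*k+1) : (UG k hk).inDeg (10*j) = 1 := by
  unfold Dgraph.inDeg
  rw [Finset.filter_congr_decidable, show (UG k hk).edges = EU k from rfl, UG_if_spine h1 h2]; rfl

lemma UG_out_leaf {v : ℕ} (hv : v ∈ XS k) : (UG k hk).outDeg v = 0 := by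
  unfold Dgraph.outDeg
  rw [Finset.filter_congr_decidable, show (UG k hk).edges = EU k from rfl, UG_of_leaf hk hv]; rfl

lemma UG_in_x {i : ℕ} (h1 : 1 ≤ i) (h2 : i ≤ k) : (UG k hk).inDeg (20*i-9) = 1 := by
  unfold Dgraph.inDeg
  rw [Finset.filter_congr_decidable, show (UG k hk).edges = EU k from rfl, UG_if_x h1 h2]; rfl

lemma UG_in_y {i : ℕ} (h1 : 1 ≤ i) (h2 : i ≤ k) : (UG k hk).inDeg (20*i+2) = 1 := by
  unfold Dgraph.inDeg
  rw [Finset.filter_congr_decidable, show (UG k hk).edges = EU k from rfl, UG_if_y h1 h2]; rfl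

lemma UG_in_z {i : ℕ} (h1 : 1 ≤ i) (h2 : i ≤ k) : (UG k hk).inDeg (20*k+10*i+2) = 1 := by
  unfold Dgraph.inDeg
  rw [Finset.filter_congr_decidable, show (UG k hk).edges = EU k from rfl, UG_if_z h1 h2]; rfl

lemma UG_reach_spine {j : ℕ} (h1 : 1 ≤ j) (h2 : j ≤ 3*k+1) : (UG k hk).Reaches 0 (10*j) := by
  induction j with
  | zero => omega
  | succ n ih =>
    rcases Nat.eq_or_lt_of_le h1 with h | h
    · have he : ((0 : ℕ), 10) ∈ EU k := mem_EU.mpr (Or.inl ⟨rfl, rfl⟩)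
      rw [show 10*(n+1) = 10 by omega]
      exact Relation.ReflTransGen.single he
    · have hn : 1 ≤ n := by omega
      have ih' := ih hn (by omega)
      have he : ((10*n : ℕ), 10*n+10) ∈ EU k :=
        mem_EU.mpr (Or.inr (Or.inl ⟨n, hn, by omega, rfl, rfl⟩))
      rw [show 10*(n+1) = 10*n+10 by ring]
      exact ih'.tail he

lemma UG_reach : ∀ v ∈ VU k, (UG k hk).Reaches 0 v := by
  intro v hv
  rw [mem_VU] at hv
  rcases hv with rfl | ⟨j, h1, h2, rfl⟩ | ⟨i, h1, h2, (rfl | rfl | rfl)⟩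
  · exact Relation.ReflTransGen.refl
  · exact UG_reach_spine hk h1 h2
  · have hs := UG_reach_spine hk (j := 2*i-1) (by omega) (by omega)
    rw [show 10*(2*i-1) = 20*i-10 by omega] at hs
    have he : ((20*i-10 : ℕ), 20*i-9) ∈ EU k :=
      mem_EU.mpr (Or.inr (Or.inr ⟨i, h1, h2, Or.inl ⟨rfl, rfl⟩⟩))
    exact hs.tail he
  · have hs := UG_reach_spine hk (j := 2*i) (by omega) (by omega)
    rw [show 10*(2*i) = 20*i by ring] at hs
    have he : ((20*i : ℕ), 20*i+2) ∈ EU k :=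
      mem_EU.mpr (Or.inr (Or.inr ⟨i, h1, h2, Or.inr (Or.inl ⟨rfl, rfl⟩)⟩))
    exact hs.tail he
  · have hs := UG_reach_spine hk (j := 2*k+i) (by omega) (by omega)
    rw [show 10*(2*k+i) = 20*k+10*i by ring] at hs
    have he : ((20*k+10*i : ℕ), 20*k+10*i+2) ∈ EU k :=
      mem_EU.mpr (Or.inr (Or.inr ⟨i, h1, h2, Or.inr (Or.inr ⟨rfl, rfl⟩)⟩))
    exact hs.tail he

lemma UG_leaves : (UG k hk).leaves = XS k := by
  ext v
  rw [Dgraph.leaves, Finset.mem_filter]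
  constructor
  · rintro ⟨hv, hdeg⟩
    rw [show (UG k hk).verts = VU k from rfl, mem_VU] at hv
    rcases hv with rfl | ⟨j, h1, h2, rfl⟩ | ⟨i, h1, h2, (rfl | rfl | rfl)⟩
    · rw [UG_out_root hk] at hdeg; omega
    · rcases Nat.lt_or_ge j (3*k+1) with h | h
      · rw [UG_out_spine hk h1 (by omega)] at hdeg; omega
      · rw [mem_XS]; exact Or.inl (by omega)
    · rw [mem_XS]; exact Or.inr (Or.inl ⟨i, h1, h2, rfl⟩)
    · rw [mem_XS]; exact Or.inr (Or.inr (Or.inl ⟨i, h1, h2, rfl⟩))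
    · rw [mem_XS]; exact Or.inr (Or.inr (Or.inr ⟨i, h1, h2, rfl⟩))
  · intro hv
    refine ⟨?_, UG_out_leaf hk hv⟩
    rw [show (UG k hk).verts = VU k from rfl, mem_VU]
    rw [mem_XS] at hv
    rcases hv with rfl | ⟨i, h1, h2, rfl⟩ | ⟨i, h1, h2, rfl⟩ | ⟨i, h1, h2, rfl⟩
    · exact Or.inr (Or.inl ⟨3*k+1, by omega, by omega, by omega⟩)
    · exact Or.inr (Or.inr ⟨i, h1, h2, Or.inl rfl⟩)
    · exact Or.inr (Or.inr ⟨i, h1, h2, Or.inr (Or.inl rfl)⟩)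
    · exact Or.inr (Or.inr ⟨i, h1, h2, Or.inr (Or.inr rfl)⟩)

def UU : PhyloNet ℕ (XS k) where
  G := UG k hk
  root := 0
  root_mem := by rw [show (UG k hk).verts = VU k from rfl, mem_VU]; exact Or.inl rfl
  root_inDeg := UG_in_root hk
  root_outDeg := UG_out_root hk
  acyclic := by
    apply acyclic_of_mono
    rintro ⟨a, b⟩ he
    rw [show (UG k hk).edges = EU k from rfl, mem_EU] at he
    rcases he with ⟨rfl, rfl⟩ | ⟨j, h1, h2, rfl, rfl⟩ |
      ⟨i, h1, h2, (⟨rfl, rfl⟩ | ⟨rfl, rfl⟩ | ⟨rfl, rfl⟩)⟩ <;> simp <;> omega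
  reach := UG_reach hk
  degrees := by
    intro v hv hne
    rw [show (UG k hk).verts = VU k from rfl, mem_VU] at hv
    rcases hv with rfl | ⟨j, h1, h2, rfl⟩ | ⟨i, h1, h2, (rfl | rfl | rfl)⟩
    · exact absurd rfl hne
    · rcases Nat.lt_or_ge j (3*k+1) with h | h
      · exact Or.inl ⟨UG_in_spine hk h1 h2, UG_out_spine hk h1 (by omega)⟩
      · refine Or.inr (Or.inr ⟨UG_in_spine hk h1 h2, UG_out_leaf hk ?_⟩)
        rw [mem_XS]; exact Or.inl (by omega)
    · refine Or.inr (Or.inr ⟨UG_in_x hk h1 h2, UG_out_leaf hk ?_⟩)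
      rw [mem_XS]; exact Or.inr (Or.inl ⟨i, h1, h2, rfl⟩)
    · refine Or.inr (Or.inr ⟨UG_in_y hk h1 h2, UG_out_leaf hk ?_⟩)
      rw [mem_XS]; exact Or.inr (Or.inr (Or.inl ⟨i, h1, h2, rfl⟩))
    · refine Or.inr (Or.inr ⟨UG_in_z hk h1 h2, UG_out_leaf hk ?_⟩)
      rw [mem_XS]; exact Or.inr (Or.inr (Or.inr ⟨i, h1, h2, rfl⟩))
  leaves_eq := UG_leaves hk
  Xnonempty := ⟨30*k+10, by rw [mem_XS]; exact Or.inl rfl⟩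

lemma UU_tree : (UU hk).IsTreeNet := by
  intro v hv
  rw [show (UU hk).G.verts = VU k from rfl, mem_VU] at hv
  rcases hv with rfl | ⟨j, h1, h2, rfl⟩ | ⟨i, h1, h2, (rfl | rfl | rfl)⟩
  · rw [show (UU hk).G.inDeg 0 = (UG k hk).inDeg 0 from rfl, UG_in_root hk]; omega
  · rw [show (UU hk).G.inDeg _ = (UG k hk).inDeg (10*j) from rfl, UG_in_spine hk h1 h2]
  · rw [show (UU hk).G.inDeg _ = (UG k hk).inDeg (20*i-9) from rfl, UG_in_x hk h1 h2]
  · rw [show (UU hk).G.inDeg _ = (UG k hk).inDeg (20*i+2) from rfl, UG_in_y hk h1 h2]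
  · rw [show (UU hk).G.inDeg _ = (UG k hk).inDeg (20*k+10*i+2) from rfl, UG_in_z hk h1 h2]

end UUdeg


/-! #### Generic batch subdivision -/

lemma Dgraph.ext' {V : Type} {G H : Dgraph V} (h1 : G.verts = H.verts)
    (h2 : G.edges = H.edges) : G = H := by
  cases G; cases H; simp_all

lemma Icc1_succ {m : ℕ} : Finset.Icc 1 (m+1) = insert (m+1) (Finset.Icc 1 m) := by
  ext x
  simp only [Finset.mem_Icc, Finset.mem_insert]
  omega

def batchV (G0 : Dgraph ℕ) (vf : ℕ → ℕ) (m : ℕ) : Finset ℕ :=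
  G0.verts ∪ (Finset.Icc 1 m).image vf

def batchE (G0 : Dgraph ℕ) (uf wf vf : ℕ → ℕ) (m : ℕ) : Finset (ℕ × ℕ) :=
  (G0.edges \ (Finset.Icc 1 m).image (fun i => (uf i, wf i))) ∪
  (Finset.Icc 1 m).biUnion (fun i => {(uf i, vf i), (vf i, wf i)})

lemma mem_batchV {G0 : Dgraph ℕ} {vf : ℕ → ℕ} {m v : ℕ} :
    v ∈ batchV G0 vf m ↔ v ∈ G0.verts ∨ ∃ i, 1 ≤ i ∧ i ≤ m ∧ v = vf i := by
  simp only [batchV, Finset.mem_union, Finset.mem_image, Finset.mem_Icc]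
  constructor
  · rintro (h | ⟨i, ⟨h1, h2⟩, rfl⟩)
    · exact Or.inl h
    · exact Or.inr ⟨i, h1, h2, rfl⟩
  · rintro (h | ⟨i, h1, h2, rfl⟩)
    · exact Or.inl h
    · exact Or.inr ⟨i, ⟨h1, h2⟩, rfl⟩

lemma mem_batchE {G0 : Dgraph ℕ} {uf wf vf : ℕ → ℕ} {m a b : ℕ} :
    (a, b) ∈ batchE G0 uf wf vf m ↔
    ((a, b) ∈ G0.edges ∧ ¬ ∃ i, 1 ≤ i ∧ i ≤ m ∧ a = uf i ∧ b = wf i) ∨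
    (∃ i, 1 ≤ i ∧ i ≤ m ∧ ((a = uf i ∧ b = vf i) ∨ (a = vf i ∧ b = wf i))) := by
  simp only [batchE, Finset.mem_union, Finset.mem_sdiff, Finset.mem_image, Finset.mem_biUnion,
    Finset.mem_Icc, Finset.mem_insert, Finset.mem_singleton, Prod.mk.injEq]
  constructor
  · rintro (⟨h1, h2⟩ | ⟨i, ⟨hi1, hi2⟩, (⟨rfl, rfl⟩ | ⟨rfl, rfl⟩)⟩)
    · refine Or.inl ⟨h1, ?_⟩
      rintro ⟨i, hi1, hi2, rfl, rfl⟩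
      exact h2 ⟨i, ⟨hi1, hi2⟩, rfl, rfl⟩
    · exact Or.inr ⟨i, hi1, hi2, Or.inl ⟨rfl, rfl⟩⟩
    · exact Or.inr ⟨i, hi1, hi2, Or.inr ⟨rfl, rfl⟩⟩
  · rintro (⟨h1, h2⟩ | ⟨i, hi1, hi2, (⟨rfl, rfl⟩ | ⟨rfl, rfl⟩)⟩)
    · refine Or.inl ⟨h1, ?_⟩
      rintro ⟨i, ⟨hi1, hi2⟩, rfl, rfl⟩
      exact h2 ⟨i, hi1, hi2, rfl, rfl⟩
    · exact Or.inr ⟨i, ⟨hi1, hi2⟩, Or.inl ⟨rfl, rfl⟩⟩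
    · exact Or.inr ⟨i, ⟨hi1, hi2⟩, Or.inr ⟨rfl, rfl⟩⟩

def batchG (G0 : Dgraph ℕ) (uf wf vf : ℕ → ℕ) (K m : ℕ) (hm : m ≤ K)
    (hmem : ∀ i, 1 ≤ i → i ≤ K → (uf i, wf i) ∈ G0.edges) : Dgraph ℕ where
  verts := batchV G0 vf m
  edges := batchE G0 uf wf vf m
  edges_sub := by
    rintro ⟨a, b⟩ he
    rw [mem_batchE] at he
    rcases he with ⟨h1, _⟩ | ⟨i, h1, h2, hc⟩
    · exact ⟨mem_batchV.mpr (Or.inl (G0.edges_sub _ h1).1),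
             mem_batchV.mpr (Or.inl (G0.edges_sub _ h1).2)⟩
    · have huw := G0.edges_sub _ (hmem i h1 (le_trans h2 hm))
      rcases hc with ⟨rfl, rfl⟩ | ⟨rfl, rfl⟩
      · exact ⟨mem_batchV.mpr (Or.inl huw.1), mem_batchV.mpr (Or.inr ⟨i, h1, h2, rfl⟩)⟩
      · exact ⟨mem_batchV.mpr (Or.inr ⟨i, h1, h2, rfl⟩), mem_batchV.mpr (Or.inl huw.2)⟩

lemma batch_subdiv (G0 : Dgraph ℕ) (uf wf vf : ℕ → ℕ) (K : ℕ)
    (hmem : ∀ i, 1 ≤ i → i ≤ K → (uf i, wf i) ∈ G0.edges)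
    (heinj : ∀ i j, 1 ≤ i → i ≤ K → 1 ≤ j → j ≤ K → uf i = uf j → wf i = wf j → i = j)
    (hfresh : ∀ i, 1 ≤ i → i ≤ K → vf i ∉ G0.verts)
    (hvinj : ∀ i j, 1 ≤ i → i ≤ K → 1 ≤ j → j ≤ K → vf i = vf j → i = j) :
    ∀ m (hm : m ≤ K), Relation.ReflTransGen Dgraph.SubdivStep G0
      (batchG G0 uf wf vf K m hm hmem) := by
  have huvert : ∀ i, 1 ≤ i → i ≤ K → uf i ∈ G0.verts :=
    fun i h1 h2 => (G0.edges_sub _ (hmem i h1 h2)).1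
  have hwvert : ∀ i, 1 ≤ i → i ≤ K → wf i ∈ G0.verts :=
    fun i h1 h2 => (G0.edges_sub _ (hmem i h1 h2)).2
  intro m
  induction m with
  | zero =>
    intro hm
    have hG : batchG G0 uf wf vf K 0 hm hmem = G0 := by
      apply Dgraph.ext'
      · show batchV G0 vf 0 = G0.verts
        unfold batchV
        rw [Finset.Icc_eq_empty (by omega), Finset.image_empty, Finset.union_empty]
      · show batchE G0 uf wf vf 0 = G0.edges
        unfold batchE
        rw [Finset.Icc_eq_empty (by omega), Finset.image_empty, Finset.sdiff_empty,
          Finset.biUnion_empty, Finset.union_empty]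
    rw [hG]
  | succ m ih =>
    intro hm
    have hm' : m ≤ K := by omega
    have h1m : 1 ≤ m+1 := by omega
    refine (ih hm').tail ?_
    refine ⟨uf (m+1), wf (m+1), vf (m+1), ?_, ?_, ?_, ?_⟩
    · show (uf (m+1), wf (m+1)) ∈ batchE G0 uf wf vf m
      rw [mem_batchE]
      refine Or.inl ⟨hmem _ h1m hm, ?_⟩
      rintro ⟨i, hi1, hi2, e1, e2⟩
      have := heinj (m+1) i h1m hm hi1 (by omega) e1 e2
      omega
    · show vf (m+1) ∉ batchV G0 vf m
      rw [mem_batchV]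
      rintro (h | ⟨i, hi1, hi2, he⟩)
      · exact hfresh _ h1m hm h
      · have := hvinj (m+1) i h1m hm hi1 (by omega) he
        omega
    · ext x
      simp only [Finset.mem_insert]
      rw [show (batchG G0 uf wf vf K (m+1) hm hmem).verts = batchV G0 vf (m+1) from rfl,
        show (batchG G0 uf wf vf K m hm' hmem).verts = batchV G0 vf m from rfl,
        mem_batchV, mem_batchV]
      constructor
      · rintro (h | ⟨i, h1, h2, rfl⟩)
        · exact Or.inr (Or.inl h)
        · rcases Nat.lt_or_ge m i with h' | h'
          · have : i = m+1 := by omega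
            subst this
            exact Or.inl rfl
          · exact Or.inr (Or.inr ⟨i, h1, h', rfl⟩)
      · rintro (rfl | h | ⟨i, h1, h2, rfl⟩)
        · exact Or.inr ⟨m+1, by omega, le_rfl, rfl⟩
        · exact Or.inl h
        · exact Or.inr ⟨i, h1, by omega, rfl⟩
    · ext ⟨a, b⟩
      simp only [Finset.mem_insert, Finset.mem_erase]
      rw [show (batchG G0 uf wf vf K (m+1) hm hmem).edges = batchE G0 uf wf vf (m+1) from rfl,
        show (batchG G0 uf wf vf K m hm' hmem).edges = batchE G0 uf wf vf m from rfl,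
        mem_batchE, mem_batchE]
      constructor
      · rintro (⟨hE, hni⟩ | ⟨i, hi1, hi2, hc⟩)
        · refine Or.inr (Or.inr ⟨?_, Or.inl ⟨hE, ?_⟩⟩)
          · intro h
            injection h with e1 e2
            exact hni ⟨m+1, h1m, le_rfl, e1, e2⟩
          · rintro ⟨i, hi1, hi2, e1, e2⟩
            exact hni ⟨i, hi1, by omega, e1, e2⟩
        · rcases Nat.lt_or_ge m i with h | h
          · have hi : i = m+1 := by omega
            subst hi
            rcases hc with ⟨rfl, rfl⟩ | ⟨rfl, rfl⟩
            · exact Or.inl rfl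
            · exact Or.inr (Or.inl rfl)
          · refine Or.inr (Or.inr ⟨?_, Or.inr ⟨i, hi1, h, hc⟩⟩)
            intro he
            injection he with e1 e2
            rcases hc with ⟨rfl, rfl⟩ | ⟨rfl, rfl⟩
            · exact hfresh i hi1 (by omega) (e2 ▸ hwvert (m+1) h1m hm)
            · exact hfresh i hi1 (by omega) (e1 ▸ huvert (m+1) h1m hm)
      · rintro (heq | heq | ⟨hne, (⟨hE, hni⟩ | ⟨i, hi1, hi2, hc⟩)⟩)
        · injection heq with e1 e2
          exact Or.inr ⟨m+1, h1m, le_rfl, Or.inl ⟨e1, e2⟩⟩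
        · injection heq with e1 e2
          exact Or.inr ⟨m+1, h1m, le_rfl, Or.inr ⟨e1, e2⟩⟩
        · refine Or.inl ⟨hE, ?_⟩
          rintro ⟨i, hi1, hi2, e1, e2⟩
          rcases Nat.lt_or_ge m i with h | h
          · have : i = m+1 := by omega
            subst this
            exact hne (by rw [e1, e2])
          · exact hni ⟨i, hi1, h, e1, e2⟩
        · exact Or.inr ⟨i, hi1, by omega, hc⟩


/-! #### Generic chain subdivision -/

def chainV (G0 : Dgraph ℕ) (cf : ℕ → ℕ) (m : ℕ) : Finset ℕ :=
  G0.verts ∪ (Finset.Icc 1 m).image cf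

def chainE (G0 : Dgraph ℕ) (cf : ℕ → ℕ) (b0 : ℕ) (m : ℕ) : Finset (ℕ × ℕ) :=
  ((G0.edges.erase (cf 0, b0)) ∪ (Finset.range m).image (fun j => (cf j, cf (j+1)))) ∪
    {(cf m, b0)}

lemma mem_chainV {G0 : Dgraph ℕ} {cf : ℕ → ℕ} {m v : ℕ} :
    v ∈ chainV G0 cf m ↔ v ∈ G0.verts ∨ ∃ i, 1 ≤ i ∧ i ≤ m ∧ v = cf i := by
  simp only [chainV, Finset.mem_union, Finset.mem_image, Finset.mem_Icc]
  constructor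
  · rintro (h | ⟨i, ⟨h1, h2⟩, rfl⟩)
    · exact Or.inl h
    · exact Or.inr ⟨i, h1, h2, rfl⟩
  · rintro (h | ⟨i, h1, h2, rfl⟩)
    · exact Or.inl h
    · exact Or.inr ⟨i, ⟨h1, h2⟩, rfl⟩

lemma mem_chainE {G0 : Dgraph ℕ} {cf : ℕ → ℕ} {b0 m a b : ℕ} :
    (a, b) ∈ chainE G0 cf b0 m ↔
    ((a, b) ∈ G0.edges ∧ (a, b) ≠ (cf 0, b0)) ∨
    (∃ j, j < m ∧ a = cf j ∧ b = cf (j+1)) ∨ (a = cf m ∧ b = b0) := by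
  simp only [chainE, Finset.mem_union, Finset.mem_erase, Finset.mem_image, Finset.mem_range,
    Finset.mem_singleton, Prod.mk.injEq]
  constructor
  · rintro ((⟨hne, h⟩ | ⟨j, hj, rfl, rfl⟩) | ⟨rfl, rfl⟩)
    · exact Or.inl ⟨h, hne⟩
    · exact Or.inr (Or.inl ⟨j, hj, rfl, rfl⟩)
    · exact Or.inr (Or.inr ⟨rfl, rfl⟩)
  · rintro (⟨h, hne⟩ | ⟨j, hj, rfl, rfl⟩ | ⟨rfl, rfl⟩)
    · exact Or.inl (Or.inl ⟨hne, h⟩)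
    · exact Or.inl (Or.inr ⟨j, hj, rfl, rfl⟩)
    · exact Or.inr ⟨rfl, rfl⟩

def chainG (G0 : Dgraph ℕ) (cf : ℕ → ℕ) (b0 K m : ℕ) (hm : m ≤ K)
    (h0 : (cf 0, b0) ∈ G0.edges) : Dgraph ℕ where
  verts := chainV G0 cf m
  edges := chainE G0 cf b0 m
  edges_sub := by
    rintro ⟨a, b⟩ he
    rw [mem_chainE] at he
    have hc0 : cf 0 ∈ G0.verts := (G0.edges_sub _ h0).1
    have hb0 : b0 ∈ G0.verts := (G0.edges_sub _ h0).2
    have hcf : ∀ j, j ≤ m → cf j ∈ chainV G0 cf m := by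
      intro j hj
      rcases Nat.eq_zero_or_pos j with rfl | hpos
      · exact mem_chainV.mpr (Or.inl hc0)
      · exact mem_chainV.mpr (Or.inr ⟨j, hpos, hj, rfl⟩)
    rcases he with ⟨h, _⟩ | ⟨j, hj, rfl, rfl⟩ | ⟨rfl, rfl⟩
    · exact ⟨mem_chainV.mpr (Or.inl (G0.edges_sub _ h).1),
             mem_chainV.mpr (Or.inl (G0.edges_sub _ h).2)⟩
    · exact ⟨hcf j (by omega), hcf (j+1) (by omega)⟩
    · exact ⟨hcf m le_rfl, mem_chainV.mpr (Or.inl hb0)⟩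

lemma chain_subdiv (G0 : Dgraph ℕ) (cf : ℕ → ℕ) (b0 K : ℕ)
    (h0 : (cf 0, b0) ∈ G0.edges)
    (hfresh : ∀ j, 1 ≤ j → j ≤ K → cf j ∉ G0.verts)
    (hcinj : ∀ i j, i ≤ K → j ≤ K → cf i = cf j → i = j) :
    ∀ m (hm : m ≤ K), Relation.ReflTransGen Dgraph.SubdivStep G0
      (chainG G0 cf b0 K m hm h0) := by
  have hc0 : cf 0 ∈ G0.verts := (G0.edges_sub _ h0).1
  have hb0v : b0 ∈ G0.verts := (G0.edges_sub _ h0).2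
  have hbne : ∀ j, 1 ≤ j → j ≤ K → b0 ≠ cf j := by
    intro j h1 h2 he
    exact hfresh j h1 h2 (he ▸ hb0v)
  intro m
  induction m with
  | zero =>
    intro hm
    have hG : chainG G0 cf b0 K 0 hm h0 = G0 := by
      apply Dgraph.ext'
      · show chainV G0 cf 0 = G0.verts
        unfold chainV
        rw [Finset.Icc_eq_empty (by omega), Finset.image_empty, Finset.union_empty]
      · ext ⟨a, b⟩
        rw [show (chainG G0 cf b0 K 0 hm h0).edges = chainE G0 cf b0 0 from rfl, mem_chainE]
        constructor
        · rintro (⟨h, _⟩ | ⟨j, hj, rfl, rfl⟩ | ⟨rfl, rfl⟩)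
          · exact h
          · omega
          · exact h0
        · intro h
          rcases eq_or_ne (a, b) (cf 0, b0) with he | hne
          · injection he with e1 e2
            exact Or.inr (Or.inr ⟨e1, e2⟩)
          · exact Or.inl ⟨h, hne⟩
    rw [hG]
  | succ m ih =>
    intro hm
    have hm' : m ≤ K := by omega
    refine (ih hm').tail ?_
    refine ⟨cf m, b0, cf (m+1), ?_, ?_, ?_, ?_⟩
    · show (cf m, b0) ∈ chainE G0 cf b0 m
      rw [mem_chainE]
      exact Or.inr (Or.inr ⟨rfl, rfl⟩)
    · show cf (m+1) ∉ chainV G0 cf m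
      rw [mem_chainV]
      rintro (h | ⟨i, hi1, hi2, he⟩)
      · exact hfresh (m+1) (by omega) hm h
      · have := hcinj i (m+1) (by omega) hm he.symm
        omega
    · ext x
      simp only [Finset.mem_insert]
      rw [show (chainG G0 cf b0 K (m+1) hm h0).verts = chainV G0 cf (m+1) from rfl,
        show (chainG G0 cf b0 K m hm' h0).verts = chainV G0 cf m from rfl,
        mem_chainV, mem_chainV]
      constructor
      · rintro (h | ⟨i, h1, h2, rfl⟩)
        · exact Or.inr (Or.inl h)
        · rcases Nat.lt_or_ge m i with h' | h'
          · have : i = m+1 := by omega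
            subst this
            exact Or.inl rfl
          · exact Or.inr (Or.inr ⟨i, h1, h', rfl⟩)
      · rintro (rfl | h | ⟨i, h1, h2, rfl⟩)
        · exact Or.inr ⟨m+1, by omega, le_rfl, rfl⟩
        · exact Or.inl h
        · exact Or.inr ⟨i, h1, by omega, rfl⟩
    · ext ⟨a, b⟩
      simp only [Finset.mem_insert, Finset.mem_erase]
      rw [show (chainG G0 cf b0 K (m+1) hm h0).edges = chainE G0 cf b0 (m+1) from rfl,
        show (chainG G0 cf b0 K m hm' h0).edges = chainE G0 cf b0 m from rfl,
        mem_chainE, mem_chainE]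
      constructor
      · rintro (⟨hE, hne⟩ | ⟨j, hj, rfl, rfl⟩ | ⟨rfl, rfl⟩)
        · refine Or.inr (Or.inr ⟨?_, Or.inl ⟨hE, hne⟩⟩)
          intro he
          injection he with e1 e2
          rcases Nat.eq_zero_or_pos m with rfl | hpos
          · exact hne (by rw [e1, e2])
          · exact hfresh m hpos hm' (e1 ▸ (G0.edges_sub _ hE).1)
        · rcases Nat.lt_or_ge j m with h' | h'
          · refine Or.inr (Or.inr ⟨?_, Or.inr (Or.inl ⟨j, h', rfl, rfl⟩)⟩)
            intro he
            injection he with e1 e2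
            exact hbne (j+1) (by omega) (by omega) e2.symm
          · have : j = m := by omega
            subst this
            exact Or.inl rfl
        · exact Or.inr (Or.inl rfl)
      · rintro (heq | heq | ⟨hne, (⟨hE, hne0⟩ | ⟨j, hj, rfl, rfl⟩ | ⟨e1, e2⟩)⟩)
        · injection heq with e1 e2
          exact Or.inr (Or.inl ⟨m, by omega, e1, e2⟩)
        · injection heq with e1 e2
          exact Or.inr (Or.inr ⟨e1, e2⟩)
        · exact Or.inl ⟨hE, hne0⟩
        · exact Or.inr (Or.inl ⟨j, by omega, rfl, rfl⟩)
        · exact absurd (by rw [e1, e2]) hne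


/-! #### `N` displays `T` -/

lemma VT_sub_VN {k : ℕ} : VT k ⊆ VN k := by
  intro v hv
  rw [mem_VT] at hv
  rw [mem_VN]
  rcases hv with rfl | rfl | ⟨j, h1, h2, rfl⟩ | ⟨j, h1, h2, rfl⟩ | ⟨i, h1, h2, rfl⟩ |
    ⟨i, h1, h2, rfl⟩
  · exact Or.inl rfl
  · exact Or.inr (Or.inl ⟨3*k+1, by omega, by omega, by omega⟩)
  · exact Or.inr (Or.inl ⟨j, h1, by omega, rfl⟩)
  · exact Or.inr (Or.inr (Or.inl ⟨j, h1, by omega, rfl⟩))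
  · exact Or.inr (Or.inr (Or.inr (Or.inl ⟨i, h1, h2, rfl⟩)))
  · exact Or.inr (Or.inr (Or.inr (Or.inr ⟨i, h1, h2, rfl⟩)))

lemma displays_T {k : ℕ} (hk : 1 ≤ k) : (NN k hk).Displays (TT hk) := by
  have hmemA : ∀ i, 1 ≤ i → i ≤ k → ((20*i+1 : ℕ), 20*k+10*i+2) ∈ (TG k hk).edges := by
    intro i h1 h2
    show _ ∈ ET k
    rw [mem_ET]
    exact Or.inr (Or.inr (Or.inr (Or.inr ⟨i, h1, h2, rfl, Or.inr rfl⟩)))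
  have hfreshA : ∀ i, 1 ≤ i → i ≤ k → (20*k+10*i+1 : ℕ) ∉ (TG k hk).verts := by
    intro i h1 h2
    rw [show (TG k hk).verts = VT k from rfl, mem_VT]
    rintro (h | h | ⟨j, hj1, hj2, h⟩ | ⟨j, hj1, hj2, h⟩ | ⟨i', hi1, hi2, h⟩ |
      ⟨i', hi1, hi2, h⟩) <;> omega
  have subA := batch_subdiv (TG k hk) (fun i => 20*i+1) (fun i => 20*k+10*i+2)
    (fun i => 20*k+10*i+1) k hmemA
    (by
      intro i j _ _ _ _ e1 e2
      have e1' : (20*i+1 : ℕ) = 20*j+1 := e1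
      omega)
    hfreshA
    (by
      intro i j _ _ _ _ e
      have e' : (20*k+10*i+1 : ℕ) = 20*k+10*j+1 := e
      omega)
    k le_rfl
  set GA := batchG (TG k hk) (fun i => 20*i+1) (fun i => 20*k+10*i+2)
    (fun i => 20*k+10*i+1) k k le_rfl hmemA with hGAdef
  have hGAverts : ∀ v : ℕ, v ∈ GA.verts ↔
      (v ∈ VT k ∨ ∃ i, 1 ≤ i ∧ i ≤ k ∧ v = 20*k+10*i+1) := fun v => mem_batchV
  have hGAedges : ∀ a b : ℕ, (a, b) ∈ GA.edges ↔
      (((a, b) ∈ ET k ∧ ¬ ∃ i, 1 ≤ i ∧ i ≤ k ∧ a = 20*i+1 ∧ b = 20*k+10*i+2) ∨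
      (∃ i, 1 ≤ i ∧ i ≤ k ∧ ((a = 20*i+1 ∧ b = 20*k+10*i+1) ∨
        (a = 20*k+10*i+1 ∧ b = 20*k+10*i+2)))) := fun a b => mem_batchE
  have h0B : ((20*k : ℕ), 30*k+10) ∈ GA.edges := by
    rw [hGAedges]
    refine Or.inl ⟨?_, ?_⟩
    · rw [mem_ET]; exact Or.inr (Or.inl ⟨rfl, rfl⟩)
    · rintro ⟨i, h1, h2, e1, e2⟩; omega
  have subB := chain_subdiv GA (fun j => 20*k+10*j) (30*k+10) k h0B
    (by
      intro j h1 h2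
      show (20*k+10*j : ℕ) ∉ GA.verts
      rw [hGAverts]
      rintro (h | ⟨i, hi1, hi2, h⟩)
      · rw [mem_VT] at h
        rcases h with h | h | ⟨j', hj1, hj2, h⟩ | ⟨j', hj1, hj2, h⟩ | ⟨i', hi1, hi2, h⟩ |
          ⟨i', hi1, hi2, h⟩ <;> omega
      · omega)
    (by
      intro i j _ _ e
      have e' : (20*k+10*i : ℕ) = 20*k+10*j := e
      omega)
    k le_rfl
  set SB := chainG GA (fun j => 20*k+10*j) (30*k+10) k k le_rfl h0B with hSBdef
  have hSBverts : ∀ v : ℕ, v ∈ SB.verts ↔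
      (v ∈ GA.verts ∨ ∃ i, 1 ≤ i ∧ i ≤ k ∧ v = 20*k+10*i) := fun v => mem_chainV
  have hSBedges : ∀ a b : ℕ, (a, b) ∈ SB.edges ↔
      (((a, b) ∈ GA.edges ∧ (a, b) ≠ (20*k, 30*k+10)) ∨
      (∃ j, j < k ∧ a = 20*k+10*j ∧ b = 20*k+10*(j+1)) ∨
      (a = 20*k+10*k ∧ b = 30*k+10)) := fun a b => mem_chainE
  refine ⟨TT_tree hk, SB, ⟨⟨?_, ?_⟩, ?_, subA.trans subB⟩⟩
  · -- verts ⊆ VN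
    intro v hv
    rw [hSBverts] at hv
    rcases hv with hv | ⟨i, h1, h2, rfl⟩
    · rw [hGAverts] at hv
      rcases hv with hv | ⟨i, h1, h2, rfl⟩
      · exact VT_sub_VN hv
      · rw [show (NN k hk).G.verts = VN k from rfl, mem_VN]
        exact Or.inr (Or.inr (Or.inl ⟨2*k+i, by omega, by omega, by omega⟩))
    · rw [show (NN k hk).G.verts = VN k from rfl, mem_VN]
      exact Or.inr (Or.inl ⟨2*k+i, by omega, by omega, by omega⟩)
  · -- edges ⊆ EN
    rintro ⟨a, b⟩ he
    rw [hSBedges] at he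
    rw [show (NN k hk).G.edges = EN k from rfl, mem_EN]
    rcases he with ⟨hGAe, hne⟩ | ⟨j, hj, rfl, rfl⟩ | ⟨rfl, rfl⟩
    · rw [hGAedges] at hGAe
      rcases hGAe with ⟨hET, hni⟩ | ⟨i, h1, h2, (⟨rfl, rfl⟩ | ⟨rfl, rfl⟩)⟩
      · rw [mem_ET] at hET
        rcases hET with ⟨rfl, rfl⟩ | ⟨rfl, rfl⟩ | ⟨j, hj1, hj2, rfl, rfl⟩ |
          ⟨j, hj1, hj2, rfl, rfl⟩ | ⟨i, hi1, hi2, rfl, (rfl | rfl)⟩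
        · exact Or.inl ⟨rfl, rfl⟩
        · exact absurd rfl hne
        · exact Or.inr (Or.inl ⟨j, hj1, by omega, rfl, Or.inl rfl⟩)
        · exact Or.inr (Or.inl ⟨j, hj1, by omega, rfl, Or.inr rfl⟩)
        · exact Or.inr (Or.inr ⟨i, hi1, hi2, Or.inl ⟨rfl, Or.inl rfl⟩⟩)
        · exact absurd ⟨i, hi1, hi2, rfl, rfl⟩ hni
      · exact Or.inr (Or.inr ⟨i, h1, h2, Or.inl ⟨rfl, Or.inr rfl⟩⟩)
      · exact Or.inr (Or.inr ⟨i, h1, h2, Or.inr ⟨rfl, rfl⟩⟩)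
    · exact Or.inr (Or.inl ⟨2*k+j, by omega, by omega, by omega, Or.inl (by omega)⟩)
    · exact Or.inr (Or.inl ⟨3*k, by omega, by omega, by omega, Or.inl (by omega)⟩)
  · -- root
    show (NN k hk).root ∈ SB.verts
    rw [show (NN k hk).root = 0 from rfl, hSBverts]
    refine Or.inl ?_
    rw [hGAverts]
    exact Or.inl (by rw [mem_VT]; exact Or.inl rfl)


lemma VU_sub_VN {k : ℕ} : VU k ⊆ VN k := by
  intro v hv
  rw [mem_VU] at hv
  rw [mem_VN]
  rcases hv with rfl | ⟨j, h1, h2, rfl⟩ | ⟨i, h1, h2, (rfl | rfl | rfl)⟩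
  · exact Or.inl rfl
  · exact Or.inr (Or.inl ⟨j, h1, h2, rfl⟩)
  · exact Or.inr (Or.inr (Or.inl ⟨2*i-1, by omega, by omega, by omega⟩))
  · exact Or.inr (Or.inr (Or.inr (Or.inl ⟨i, h1, h2, rfl⟩)))
  · exact Or.inr (Or.inr (Or.inr (Or.inr ⟨i, h1, h2, rfl⟩)))

lemma displays_U {k : ℕ} (hk : 1 ≤ k) : (NN k hk).Displays (UU hk) := by
  have hmemC : ∀ i, 1 ≤ i → i ≤ k → ((20*i : ℕ), 20*i+2) ∈ (UG k hk).edges := by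
    intro i h1 h2
    show _ ∈ EU k
    rw [mem_EU]
    exact Or.inr (Or.inr ⟨i, h1, h2, Or.inr (Or.inl ⟨rfl, rfl⟩)⟩)
  have hfreshC : ∀ i, 1 ≤ i → i ≤ k → (20*i+1 : ℕ) ∉ (UG k hk).verts := by
    intro i h1 h2
    rw [show (UG k hk).verts = VU k from rfl, mem_VU]
    rintro (h | ⟨j, hj1, hj2, h⟩ | ⟨i', hi1, hi2, (h | h | h)⟩) <;> omega
  have subC := batch_subdiv (UG k hk) (fun i => 20*i) (fun i => 20*i+2)
    (fun i => 20*i+1) k hmemC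
    (by
      intro i j _ _ _ _ e1 e2
      have e1' : (20*i : ℕ) = 20*j := e1
      omega)
    hfreshC
    (by
      intro i j _ _ _ _ e
      have e' : (20*i+1 : ℕ) = 20*j+1 := e
      omega)
    k le_rfl
  set GC := batchG (UG k hk) (fun i => 20*i) (fun i => 20*i+2)
    (fun i => 20*i+1) k k le_rfl hmemC with hGCdef
  have hGCverts : ∀ v : ℕ, v ∈ GC.verts ↔
      (v ∈ VU k ∨ ∃ i, 1 ≤ i ∧ i ≤ k ∧ v = 20*i+1) := fun v => mem_batchV
  have hGCedges : ∀ a b : ℕ, (a, b) ∈ GC.edges ↔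
      (((a, b) ∈ EU k ∧ ¬ ∃ i, 1 ≤ i ∧ i ≤ k ∧ a = 20*i ∧ b = 20*i+2) ∨
      (∃ i, 1 ≤ i ∧ i ≤ k ∧ ((a = 20*i ∧ b = 20*i+1) ∨
        (a = 20*i+1 ∧ b = 20*i+2)))) := fun a b => mem_batchE
  have hmemD : ∀ i, 1 ≤ i → i ≤ k → ((20*k+10*i : ℕ), 20*k+10*i+2) ∈ GC.edges := by
    intro i h1 h2
    rw [hGCedges]
    refine Or.inl ⟨?_, ?_⟩
    · rw [mem_EU]; exact Or.inr (Or.inr ⟨i, h1, h2, Or.inr (Or.inr ⟨rfl, rfl⟩)⟩)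
    · rintro ⟨i', h1', h2', e1, e2⟩; omega
  have hfreshD : ∀ i, 1 ≤ i → i ≤ k → (20*k+10*i+1 : ℕ) ∉ GC.verts := by
    intro i h1 h2
    rw [hGCverts]
    rintro (h | ⟨i', hi1, hi2, h⟩)
    · rw [mem_VU] at h
      rcases h with h | ⟨j, hj1, hj2, h⟩ | ⟨i', hi1, hi2, (h | h | h)⟩ <;> omega
    · omega
  have subD := batch_subdiv GC (fun i => 20*k+10*i) (fun i => 20*k+10*i+2)
    (fun i => 20*k+10*i+1) k hmemD
    (by
      intro i j _ _ _ _ e1 e2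
      have e1' : (20*k+10*i : ℕ) = 20*k+10*j := e1
      omega)
    hfreshD
    (by
      intro i j _ _ _ _ e
      have e' : (20*k+10*i+1 : ℕ) = 20*k+10*j+1 := e
      omega)
    k le_rfl
  set SD := batchG GC (fun i => 20*k+10*i) (fun i => 20*k+10*i+2)
    (fun i => 20*k+10*i+1) k k le_rfl hmemD with hSDdef
  have hSDverts : ∀ v : ℕ, v ∈ SD.verts ↔
      (v ∈ GC.verts ∨ ∃ i, 1 ≤ i ∧ i ≤ k ∧ v = 20*k+10*i+1) := fun v => mem_batchV
  have hSDedges : ∀ a b : ℕ, (a, b) ∈ SD.edges ↔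
      (((a, b) ∈ GC.edges ∧ ¬ ∃ i, 1 ≤ i ∧ i ≤ k ∧ a = 20*k+10*i ∧ b = 20*k+10*i+2) ∨
      (∃ i, 1 ≤ i ∧ i ≤ k ∧ ((a = 20*k+10*i ∧ b = 20*k+10*i+1) ∨
        (a = 20*k+10*i+1 ∧ b = 20*k+10*i+2)))) := fun a b => mem_batchE
  refine ⟨UU_tree hk, SD, ⟨⟨?_, ?_⟩, ?_, subC.trans subD⟩⟩
  · intro v hv
    rw [hSDverts] at hv
    rw [show (NN k hk).G.verts = VN k from rfl]
    rcases hv with hv | ⟨i, h1, h2, rfl⟩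
    · rw [hGCverts] at hv
      rcases hv with hv | ⟨i, h1, h2, rfl⟩
      · exact VU_sub_VN hv
      · rw [mem_VN]
        exact Or.inr (Or.inr (Or.inl ⟨2*i, by omega, by omega, by omega⟩))
    · rw [mem_VN]
      exact Or.inr (Or.inr (Or.inl ⟨2*k+i, by omega, by omega, by omega⟩))
  · rintro ⟨a, b⟩ he
    rw [hSDedges] at he
    rw [show (NN k hk).G.edges = EN k from rfl, mem_EN]
    rcases he with ⟨hGCe, hniD⟩ | ⟨i, h1, h2, (⟨rfl, rfl⟩ | ⟨rfl, rfl⟩)⟩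
    · rw [hGCedges] at hGCe
      rcases hGCe with ⟨hEU, hniC⟩ | ⟨i, h1, h2, (⟨rfl, rfl⟩ | ⟨rfl, rfl⟩)⟩
      · rw [mem_EU] at hEU
        rcases hEU with ⟨rfl, rfl⟩ | ⟨j, hj1, hj2, rfl, rfl⟩ |
          ⟨i, hi1, hi2, (⟨rfl, rfl⟩ | ⟨rfl, rfl⟩ | ⟨rfl, rfl⟩)⟩
        · exact Or.inl ⟨rfl, rfl⟩
        · exact Or.inr (Or.inl ⟨j, hj1, hj2, rfl, Or.inl rfl⟩)
        · exact Or.inr (Or.inl ⟨2*i-1, by omega, by omega, by omega, Or.inr (by omega)⟩)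
        · exact absurd ⟨i, hi1, hi2, rfl, rfl⟩ hniC
        · exact absurd ⟨i, hi1, hi2, rfl, rfl⟩ hniD
      · exact Or.inr (Or.inl ⟨2*i, by omega, by omega, by omega, Or.inr (by omega)⟩)
      · exact Or.inr (Or.inr ⟨i, h1, h2, Or.inl ⟨rfl, Or.inl rfl⟩⟩)
    · exact Or.inr (Or.inl ⟨2*k+i, by omega, by omega, by omega, Or.inr (by omega)⟩)
    · exact Or.inr (Or.inr ⟨i, h1, h2, Or.inr ⟨by omega, by omega⟩⟩)
  · show (NN k hk).root ∈ SD.verts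
    rw [show (NN k hk).root = 0 from rfl, hSDverts]
    refine Or.inl ?_
    rw [hGCverts]
    exact Or.inl (by rw [mem_VU]; exact Or.inl rfl)


/-! #### Parsimony scores -/

lemma decide_ne_iff {c a b : ℕ} :
    ((decide (c ≤ a) : Bool) ≠ decide (c ≤ b)) ↔ ¬(c ≤ a ↔ c ≤ b) := by
  rw [ne_eq, decide_eq_decide]

lemma ch_U {k : ℕ} (hk : 1 ≤ k) :
    ch (fun v => decide (20*k+10 ≤ v)) (UG k hk) = 1 := by
  unfold ch
  rw [Finset.filter_congr_decidable]
  have heq : (UG k hk).edges.filter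
      (fun e => (decide (20*k+10 ≤ e.1) : Bool) ≠ decide (20*k+10 ≤ e.2)) =
      {((20*k : ℕ), 20*k+10)} := by
    ext ⟨a, b⟩
    rw [Finset.mem_filter, Finset.mem_singleton]
    constructor
    · rintro ⟨he, hne⟩
      rw [show (UG k hk).edges = EU k from rfl, mem_EU] at he
      rw [decide_ne_iff] at hne
      rcases he with ⟨rfl, rfl⟩ | ⟨j, hj1, hj2, rfl, rfl⟩ |
        ⟨i, hi1, hi2, (⟨rfl, rfl⟩ | ⟨rfl, rfl⟩ | ⟨rfl, rfl⟩)⟩ <;>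
        simp only [Prod.mk.injEq] <;> omega
    · rintro h
      injection h with e1 e2
      subst e1; subst e2
      refine ⟨?_, ?_⟩
      · rw [show (UG k hk).edges = EU k from rfl, mem_EU]
        exact Or.inr (Or.inl ⟨2*k, by omega, by omega, by omega, by omega⟩)
      · rw [decide_ne_iff]; omega
  rw [heq]; rfl

lemma PS_U {k : ℕ} (hk : 1 ≤ k) :
    PS (XS k) (fun v => decide (20*k+10 ≤ v)) (UG k hk) = 1 := by
  apply le_antisymm
  · exact PS_le (fun x _ => rfl) (ch_U hk)
  · exact one_le_PS (UU hk) _ (fchar hk)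

lemma ch_T {k : ℕ} (hk : 1 ≤ k) :
    ch (fun v => decide (20*k+10 ≤ v)) (TG k hk) = k+1 := by
  unfold ch
  rw [Finset.filter_congr_decidable]
  have heq : (TG k hk).edges.filter
      (fun e => (decide (20*k+10 ≤ e.1) : Bool) ≠ decide (20*k+10 ≤ e.2)) =
      insert ((20*k : ℕ), 30*k+10)
        ((Finset.Icc 1 k).image (fun i => (20*i+1, 20*k+10*i+2))) := by
    ext ⟨a, b⟩
    rw [Finset.mem_filter, Finset.mem_insert, Finset.mem_image]
    constructor
    · rintro ⟨he, hne⟩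
      rw [show (TG k hk).edges = ET k from rfl, mem_ET] at he
      rw [decide_ne_iff] at hne
      rcases he with ⟨rfl, rfl⟩ | ⟨rfl, rfl⟩ | ⟨j, hj1, hj2, rfl, rfl⟩ |
        ⟨j, hj1, hj2, rfl, rfl⟩ | ⟨i, hi1, hi2, rfl, (rfl | rfl)⟩
      · omega
      · exact Or.inl rfl
      · omega
      · omega
      · omega
      · exact Or.inr ⟨i, Finset.mem_Icc.mpr ⟨hi1, hi2⟩, rfl⟩
    · rintro (h | ⟨i, hi, h⟩)
      · injection h with e1 e2
        subst e1; subst e2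
        refine ⟨?_, ?_⟩
        · rw [show (TG k hk).edges = ET k from rfl, mem_ET]
          exact Or.inr (Or.inl ⟨rfl, rfl⟩)
        · rw [decide_ne_iff]; omega
      · rw [Finset.mem_Icc] at hi
        injection h with e1 e2
        subst e1; subst e2
        refine ⟨?_, ?_⟩
        · rw [show (TG k hk).edges = ET k from rfl, mem_ET]
          exact Or.inr (Or.inr (Or.inr (Or.inr ⟨i, hi.1, hi.2, rfl, Or.inr rfl⟩)))
        · rw [decide_ne_iff]; omega
  rw [heq, Finset.card_insert_of_notMem, Finset.card_image_of_injOn, Nat.card_Icc]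
  · omega
  · intro x hx y hy hxy
    simp only [Finset.coe_Icc, Set.mem_Icc] at hx hy
    simp only [Prod.mk.injEq] at hxy
    omega
  · rintro hmem
    obtain ⟨i, hi, he⟩ := Finset.mem_image.mp hmem
    rw [Finset.mem_Icc] at hi
    injection he with e1 e2
    omega

lemma lower_T {k : ℕ} (hk : 1 ≤ k) :
    ∀ F : ℕ → Bool, IsExtension (XS k) (fun v => decide (20*k+10 ≤ v)) F →
      k+1 ≤ ch F (TG k hk) := by
  intro F hF
  unfold ch
  rw [Finset.filter_congr_decidable]
  set P : ℕ → Finset (ℕ × ℕ) := fun n =>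
    if n = 0 then {(20*k-10, 20*k-9), (20*k-10, 20*k), (20*k, 30*k+10)}
    else {(20*n+1, 20*n+2), (20*n+1, 20*k+10*n+2)} with hP
  apply card_lower (P := P) (m := k+1)
  · intro i hi j hj hij
    rw [Finset.disjoint_left]
    rintro ⟨a, b⟩ ha hb
    by_cases hi0 : i = 0 <;> by_cases hj0 : j = 0
    · exact hij (hi0.trans hj0.symm)
    · subst hi0
      simp only [hP, if_pos, if_neg hj0, Finset.mem_insert, Finset.mem_singleton,
        Prod.mk.injEq] at ha hb
      omega
    · subst hj0
      simp only [hP, if_pos, if_neg hi0, Finset.mem_insert, Finset.mem_singleton,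
        Prod.mk.injEq] at ha hb
      omega
    · simp only [hP, if_neg hi0, if_neg hj0, Finset.mem_insert, Finset.mem_singleton,
        Prod.mk.injEq] at ha hb
      omega
  · intro n hn
    by_contra hne
    have hall : ∀ e, e ∈ P n → e ∉ (TG k hk).edges.filter (fun e => F e.1 ≠ F e.2) := by
      intro e he hes
      exact hne ⟨e, Finset.mem_inter.mpr ⟨he, hes⟩⟩
    have key : ∀ a b : ℕ, (a, b) ∈ ET k → (a, b) ∈ P n → F a = F b := by
      intro a b hET hPn
      by_contra hcon
      exact hall _ hPn (Finset.mem_filter.mpr ⟨hET, hcon⟩)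
    by_cases hn0 : n = 0
    · subst hn0
      have hP0 : ∀ e : ℕ × ℕ, e ∈ P 0 ↔ (e = (20*k-10, 20*k-9) ∨ e = (20*k-10, 20*k) ∨
          e = (20*k, 30*k+10)) := by
        intro e
        simp only [hP, if_pos, Finset.mem_insert, Finset.mem_singleton]
      have e1 : F (20*k-10) = F (20*k-9) := by
        refine key _ _ ?_ ((hP0 _).mpr (Or.inl rfl))
        rw [mem_ET]
        exact Or.inr (Or.inr (Or.inr (Or.inl ⟨2*k-1, by omega, by omega, by omega, by omega⟩)))
      have e2 : F (20*k-10) = F (20*k) := by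
        refine key _ _ ?_ ((hP0 _).mpr (Or.inr (Or.inl rfl)))
        rw [mem_ET]
        exact Or.inr (Or.inr (Or.inl ⟨2*k-1, by omega, by omega, by omega, by omega⟩))
      have e3 : F (20*k) = F (30*k+10) := by
        refine key _ _ ?_ ((hP0 _).mpr (Or.inr (Or.inr rfl)))
        rw [mem_ET]
        exact Or.inr (Or.inl ⟨rfl, rfl⟩)
      have hx : F (20*k-9) = false := by
        rw [hF _ (mem_XS.mpr (Or.inr (Or.inl ⟨k, hk, le_rfl, rfl⟩)))]
        simp only [decide_eq_false_iff_not]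
        omega
      have hw : F (30*k+10) = true := by
        rw [hF _ (mem_XS.mpr (Or.inl rfl))]
        simp only [decide_eq_true_eq]
        omega
      have : (false : Bool) = true := by
        rw [← hx, ← hw, ← e1, e2, e3]
      simp at this
    · have hn1 : 1 ≤ n ∧ n ≤ k := by omega
      have hPn : ∀ e : ℕ × ℕ, e ∈ P n ↔ (e = (20*n+1, 20*n+2) ∨
          e = (20*n+1, 20*k+10*n+2)) := by
        intro e
        simp only [hP, if_neg hn0, Finset.mem_insert, Finset.mem_singleton]
      have e1 : F (20*n+1) = F (20*n+2) := by
        refine key _ _ ?_ ((hPn _).mpr (Or.inl rfl))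
        rw [mem_ET]
        exact Or.inr (Or.inr (Or.inr (Or.inr ⟨n, hn1.1, hn1.2, rfl, Or.inl rfl⟩)))
      have e2 : F (20*n+1) = F (20*k+10*n+2) := by
        refine key _ _ ?_ ((hPn _).mpr (Or.inr rfl))
        rw [mem_ET]
        exact Or.inr (Or.inr (Or.inr (Or.inr ⟨n, hn1.1, hn1.2, rfl, Or.inr rfl⟩)))
      have hy : F (20*n+2) = false := by
        rw [hF _ (mem_XS.mpr (Or.inr (Or.inr (Or.inl ⟨n, hn1.1, hn1.2, rfl⟩))))]
        simp only [decide_eq_false_iff_not]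
        omega
      have hz : F (20*k+10*n+2) = true := by
        rw [hF _ (mem_XS.mpr (Or.inr (Or.inr (Or.inr ⟨n, hn1.1, hn1.2, rfl⟩))))]
        simp only [decide_eq_true_eq]
        omega
      have : (false : Bool) = true := by
        rw [← hy, ← hz, ← e1, e2]
      simp at this

lemma PS_T {k : ℕ} (hk : 1 ≤ k) :
    PS (XS k) (fun v => decide (20*k+10 ≤ v)) (TG k hk) = k+1 := by
  apply le_antisymm
  · exact PS_le (fun x _ => rfl) (ch_T hk)
  · exact le_PS (lower_T hk)

lemma PSsw_N {k : ℕ} (hk : 1 ≤ k) :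
    PSsw (NN k hk) (fun v => decide (20*k+10 ≤ v)) = 1 := by
  apply le_antisymm
  · exact Nat.sInf_le ⟨UU hk, displays_U hk, PS_U hk⟩
  · refine le_csInf ⟨1, UU hk, displays_U hk, PS_U hk⟩ ?_
    rintro n ⟨T'', hdisp, rfl⟩
    exact one_le_PS T'' _ (fchar hk)

end Sharp















/-- **Sharpness of the bound.** For every `k ≥ 1` there exist a rooted binary level-`k`
phylogenetic network `N` on a set `X` of `3k+1` leaves, a binary character `f` on `X`, and
trees `T, T' ∈ D(N)` with `PS(f,T') = PS_sw(f,N) = 1` and `PS(f,T) = k+1`; in particular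
`PS(f,T) = (k+1)·PS_sw(f,N)`, so the bound of the main theorem is sharp. -/
theorem bound_is_sharp : ∀ k : ℕ, 1 ≤ k →
    ∃ (X : Finset ℕ) (N T T' : PhyloNet ℕ X) (f : ℕ → Bool),
      X.card = 3 * k + 1 ∧ N.IsLevel k ∧ IsCharacter X f ∧
      N.Displays T ∧ N.Displays T' ∧
      PS X f T'.G = 1 ∧ PSsw N f = 1 ∧ PS X f T.G = k + 1 ∧
      PS X f T.G = (k + 1) * PSsw N f := by
  intro k hk
  refine ⟨XS k, NN k hk, TT hk, UU hk, fun v => decide (20*k+10 ≤ v),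
    XS_card hk, NN_level hk, fchar hk, displays_T hk, displays_U hk,
    PS_U hk, PSsw_N hk, PS_T hk, ?_⟩
  rw [show (TT hk).G = TG k hk from rfl, PS_T hk, PSsw_N hk, mul_one]

end
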